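/- arXiv:2005.06689 — 5 statements merged into one kernel-verified Lean document; each statement's English description precedes it below -/
import Mathlib

section
/- For any n ≥ 1 and any subset S ⊆ {1̄,…,n̄} with |S| = i, the polynomial Jsp_{n,S}(x,y,z) = Σ_{π∈JSP_{n,S}} x^{asc(π)} y^{des(π)} z^{plat(π)} equals S_{m(S)}(x,y,z) = Σ_{π∈Q_{m(S)}} x^{asc(π)} y^{des(π)} z^{plat(π)}, where m(S) = (m_1,…,m_{2n−i}) is the vector defined by m_ℓ = 2 if ℓ = p + #{a ∈ [n]∖S' : a ≤ p} for some 1 ≤ p ≤ n (where S' ⊆ [n] corresponds to S under a ↦ ā), and m_ℓ = 1 otherwise. -/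
open scoped Classical

noncomputable section

/-- The `i`-th entry of the word `π`, positions `1,…,m`, with the boundary
convention `π₀ = π_{m+1} = 0` (indeed `ent π i = 0` for `i = 0` or `i > π.length`). -/
def ent (π : List ℕ) (i : ℕ) : ℕ := if i = 0 then 0 else π.getD (i - 1) 0

/-- The index set `{0, 1, …, m}`. -/
def idx0 (π : List ℕ) : Finset ℕ := Finset.range (π.length + 1)

/-- The index set `[m] = {1, …, m}`. -/
def idx1 (π : List ℕ) : Finset ℕ := Finset.Icc 1 π.length

/-- Number of ascents. -/
def asc (π : List ℕ) : ℕ := ((idx0 π).filter fun i => ent π i < ent π (i + 1)).card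

/-- Number of descents. -/
def des (π : List ℕ) : ℕ := ((idx0 π).filter fun i => ent π (i + 1) < ent π i).card

/-- Number of plateaux. -/
def plat (π : List ℕ) : ℕ := ((idx0 π).filter fun i => ent π i = ent π (i + 1)).card

/-- Number of single descents: descents `i ∈ [m]` whose letter `π_i` occurs once. -/
def sdes (π : List ℕ) : ℕ :=
  ((idx1 π).filter fun i => ent π (i + 1) < ent π i ∧ π.count (ent π i) = 1).card

/-- Number of multiple descents: descents `i ∈ [m]` whose letter `π_i` occurs more than once. -/
def mdes (π : List ℕ) : ℕ :=
  ((idx1 π).filter fun i => ent π (i + 1) < ent π i ∧ 2 ≤ π.count (ent π i)).card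

/-- Number of double-ascents. -/
def dasc (π : List ℕ) : ℕ :=
  ((idx1 π).filter fun i => ent π (i - 1) < ent π i ∧ ent π i < ent π (i + 1)).card

/-- Number of single double-descents. -/
def sddes (π : List ℕ) : ℕ :=
  ((idx1 π).filter fun i =>
    ent π (i + 1) < ent π i ∧ ent π i < ent π (i - 1) ∧ π.count (ent π i) = 1).card

/-- `i` is a plateau of `π`. -/
def IsPlateau (π : List ℕ) (i : ℕ) : Prop := ent π i = ent π (i + 1)

/-- `i` is a first plateau of `π`. -/
def IsFirstPlateau (π : List ℕ) (i : ℕ) : Prop :=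
  IsPlateau π i ∧ ∀ j, 1 ≤ j → j < i → ent π j ≠ ent π i

/-- `i` is an ascent-plateau of `π`. -/
def IsAscPlateau (π : List ℕ) (i : ℕ) : Prop := ent π (i - 1) < ent π i ∧ IsPlateau π i

/-- `i` is a free descent-plateau of `π`. -/
def IsFreeDescPlateau (π : List ℕ) (i : ℕ) : Prop :=
  ent π i < ent π (i - 1) ∧ IsPlateau π i ∧ ∀ j, 1 ≤ j → j < i → ent π j ≠ ent π i

/-- `i` is an unmovable plateau of `π`. -/
def IsUnmovablePlateau (π : List ℕ) (i : ℕ) : Prop :=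
  IsPlateau π i ∧ ¬ IsFreeDescPlateau π i ∧ ¬ IsAscPlateau π i

/-- Number of first plateaux. -/
def fplat (π : List ℕ) : ℕ := ((idx1 π).filter fun i => IsFirstPlateau π i).card

/-- Number of unmovable plateaux. -/
def uplat (π : List ℕ) : ℕ := ((idx1 π).filter fun i => IsUnmovablePlateau π i).card

/-- Number of free descent-plateaux. -/
def fdesp (π : List ℕ) : ℕ := ((idx1 π).filter fun i => IsFreeDescPlateau π i).card

/-- Number of ascent-plateaux and peaks. -/
def ascpp (π : List ℕ) : ℕ :=
  ((idx1 π).filter fun i =>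
    (ent π (i - 1) < ent π i ∧ IsPlateau π i) ∨
    (ent π (i - 1) < ent π i ∧ ent π (i + 1) < ent π i)).card

/-- Number of indices that are multiple descents or unmovable plateaux. -/
def mdup (π : List ℕ) : ℕ :=
  ((idx1 π).filter fun i =>
    (ent π (i + 1) < ent π i ∧ 2 ≤ π.count (ent π i)) ∨ IsUnmovablePlateau π i).card

/-- The multiset `M_m = {1^{m₁}, …, n^{mₙ}}`. -/
def Mm {n : ℕ} (mv : Fin n → ℕ) : Multiset ℕ :=
  ∑ i : Fin n, Multiset.replicate (mv i) (i.1 + 1)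

/-- The generalized Stirling condition: all the entries lying between any two occurrences
of a letter are larger than (or equal to, i.e. other occurrences of) that letter. -/
def IsGenStirling (π : List ℕ) : Prop :=
  ∀ c < π.length, ∀ b < c, ∀ a < b,
    π.getD a 0 = π.getD c 0 → π.getD a 0 ≤ π.getD b 0

/-- `Q_m`: the (finite) set of generalized Stirling permutations of `M_m`. -/
def QF {n : ℕ} (mv : Fin n → ℕ) : Finset (List ℕ) :=
  (Mm mv).toList.permutations.toFinset.filter fun π => IsGenStirling π


/-- The multiset `M_{n,S}` of Jacobi–Stirling letters: the letter `a ∈ [n]` is encoded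
as `2a` (two copies each) and the barred letter `ā` as `2a - 1` (one copy, kept for each
`a ∉ S`); this encoding realizes the total order `1̄ < 1 < 2̄ < 2 < ⋯ < n̄ < n`. -/
def MnS (n : ℕ) (S : Finset (Fin n)) : Multiset ℕ :=
  (∑ i : Fin n, Multiset.replicate 2 (2 * (i.1 + 1)))
    + (Finset.univ \ S).val.map fun i => 2 * i.1 + 1

/-- The Jacobi–Stirling condition: all entries lying strictly between two occurrences of
a letter are larger than that letter. -/
def IsJS (π : List ℕ) : Prop :=
  ∀ c < π.length, ∀ b < c, ∀ a < b, π.getD a 0 = π.getD c 0 → π.getD a 0 < π.getD b 0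

/-- `JSP_{n,S}`: the Jacobi–Stirling permutations of `M_{n,S}`. -/
def JSPF (n : ℕ) (S : Finset (Fin n)) : Finset (List ℕ) :=
  (MnS n S).toList.permutations.toFinset.filter fun π => IsJS π

/-- `JSP_{n,i} = ⋃_{S ⊆ [n̄], |S| = i} JSP_{n,S}`. -/
def JSPFi (n i : ℕ) : Finset (List ℕ) :=
  (Finset.univ.filter fun S : Finset (Fin n) => S.card = i).biUnion fun S => JSPF n S

/-- The multiplicity vector `m(S) = (m_1, …, m_{2n-i})` associated with `S ⊆ [n̄]`
(identified with `S ⊆ [n]` via `a ↦ ā`): `m_ℓ = 2` if `ℓ = p + #{a ∈ [n] \ S : a ≤ p}`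
for some `1 ≤ p ≤ n`, and `m_ℓ = 1` otherwise.  Here the index `ℓ : Fin (2n - |S|)`
encodes the letter `ℓ + 1`. -/
def mS (n : ℕ) (S : Finset (Fin n)) : Fin (2 * n - S.card) → ℕ := fun ℓ =>
  if ∃ p ∈ Finset.Icc 1 n,
      ℓ.1 + 1 = p + (Finset.univ.filter fun a : Fin n => a ∉ S ∧ a.1 + 1 ≤ p).card
  then 2 else 1

/-! Replacing each letter of `M_{n,S}` by its rank among the letters is strictly increasing
and fixes the boundary letter `0`, so it preserves ascents, descents, plateaux and both
Stirling-type conditions. The rank of the doubled letter `p` is `p + #{a ∉ S' : a ≤ p}`, so the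
relabelled multiset is exactly `M_{m(S)}`. Since no letter of `M_{n,S}` occurs more than
twice, a generalized Stirling permutation of it is already Jacobi–Stirling: an entry equal to
`π_a = π_c` strictly between them would be a third copy. -/

open Finset

section Relabel

variable {F : ℕ → ℕ} {π : List ℕ}

lemma getD_mem_insert_zero (π : List ℕ) (k : ℕ) : π.getD k 0 ∈ insert 0 {v | v ∈ π} := by
  rcases lt_or_ge k π.length with h | h
  · rw [List.getD_eq_getElem π 0 h]
    exact Set.mem_insert_of_mem _ (List.getElem_mem h)
  · rw [List.getD_eq_default π 0 h]
    exact Set.mem_insert 0 _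

lemma ent_mem_insert_zero (π : List ℕ) (i : ℕ) : ent π i ∈ insert 0 {v | v ∈ π} := by
  unfold ent
  split_ifs
  · exact Set.mem_insert 0 _
  · exact getD_mem_insert_zero π _

lemma getD_map_of_map_zero (hF0 : F 0 = 0) (k : ℕ) : (π.map F).getD k 0 = F (π.getD k 0) := by
  simpa only [hF0] using List.getD_map π 0 (n := k) F

lemma ent_map (hF0 : F 0 = 0) (i : ℕ) : ent (π.map F) i = F (ent π i) := by
  unfold ent
  split_ifs
  · exact hF0.symm
  · exact getD_map_of_map_zero hF0 _

lemma asc_map (hF0 : F 0 = 0) (hF : StrictMonoOn F (insert 0 {v | v ∈ π})) :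
    asc (π.map F) = asc π := by
  simp only [asc, idx0, List.length_map, ent_map hF0]
  congr 1
  exact filter_congr fun i _ => hF.lt_iff_lt (ent_mem_insert_zero π i) (ent_mem_insert_zero π _)

lemma des_map (hF0 : F 0 = 0) (hF : StrictMonoOn F (insert 0 {v | v ∈ π})) :
    des (π.map F) = des π := by
  simp only [des, idx0, List.length_map, ent_map hF0]
  congr 1
  exact filter_congr fun i _ => hF.lt_iff_lt (ent_mem_insert_zero π _) (ent_mem_insert_zero π i)

lemma plat_map (hF0 : F 0 = 0) (hF : StrictMonoOn F (insert 0 {v | v ∈ π})) :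
    plat (π.map F) = plat π := by
  simp only [plat, idx0, List.length_map, ent_map hF0]
  congr 1
  exact filter_congr fun i _ =>
    hF.injOn.eq_iff (ent_mem_insert_zero π i) (ent_mem_insert_zero π _)

lemma isGenStirling_map_iff (hF0 : F 0 = 0) (hF : StrictMonoOn F (insert 0 {v | v ∈ π})) :
    IsGenStirling (π.map F) ↔ IsGenStirling π := by
  simp only [IsGenStirling, List.length_map, getD_map_of_map_zero hF0]
  refine forall₂_congr fun c _ => forall₂_congr fun b _ => forall₂_congr fun a _ => ?_
  rw [hF.injOn.eq_iff (getD_mem_insert_zero π a) (getD_mem_insert_zero π c),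
    hF.le_iff_le (getD_mem_insert_zero π a) (getD_mem_insert_zero π b)]

end Relabel

lemma three_le_count_of_getElem_eq {l : List ℕ} {a b c : ℕ} (hab : a < b) (hbc : b < c)
    (hc : c < l.length) (hb : l[b] = l[a]) (hc' : l[c] = l[a]) : 3 ≤ l.count l[a] := by
  have hcount := Fin.card_filter_univ_eq_vector_get_eq_count l[a] (⟨l, rfl⟩ : List.Vector ℕ _)
  rw [List.Vector.toList_mk] at hcount
  rw [← hcount]
  calc 3 = #({⟨a, by omega⟩, ⟨b, by omega⟩, ⟨c, hc⟩} : Finset (Fin l.length)) := by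
        rw [card_insert_of_notMem, card_pair] <;>
          simp only [ne_eq, mem_insert, mem_singleton, Fin.mk.injEq, not_or] <;> omega
    _ ≤ _ := card_le_card fun i hi => by
        simp only [mem_insert, mem_singleton] at hi
        rcases hi with rfl | rfl | rfl
        exacts [mem_filter.2 ⟨mem_univ _, rfl⟩, mem_filter.2 ⟨mem_univ _, hb⟩,
          mem_filter.2 ⟨mem_univ _, hc'⟩]

lemma IsJS.isGenStirling {π : List ℕ} (h : IsJS π) : IsGenStirling π :=
  fun c hc b hb a ha hac => (h c hc b hb a ha hac).le

lemma IsGenStirling.isJS {π : List ℕ} (h : IsGenStirling π) (hπ : ∀ v, π.count v ≤ 2) :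
    IsJS π := by
  intro c hc b hb a ha hac
  refine (h c hc b hb a ha hac).lt_of_ne fun hab => ?_
  rw [List.getD_eq_getElem π 0 (by omega), List.getD_eq_getElem π 0 (by omega)] at hab
  rw [List.getD_eq_getElem π 0 (by omega), List.getD_eq_getElem π 0 hc] at hac
  exact (three_le_count_of_getElem_eq ha hb hc hab.symm hac.symm).not_gt
    (Nat.lt_succ_of_le (hπ π[a]))

def jsPerms (M : Multiset ℕ) : Finset (List ℕ) :=
  M.toList.permutations.toFinset.filter IsJS

def genStirlingPerms (M : Multiset ℕ) : Finset (List ℕ) :=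
  M.toList.permutations.toFinset.filter IsGenStirling

lemma mem_permutations_toList_toFinset {M : Multiset ℕ} {π : List ℕ} :
    π ∈ M.toList.permutations.toFinset ↔ (π : Multiset ℕ) = M := by
  rw [List.mem_toFinset, List.mem_permutations, ← Multiset.coe_eq_coe, Multiset.coe_toList]

lemma mem_jsPerms {M : Multiset ℕ} {π : List ℕ} :
    π ∈ jsPerms M ↔ (π : Multiset ℕ) = M ∧ IsJS π := by
  rw [jsPerms, mem_filter, mem_permutations_toList_toFinset]

lemma mem_genStirlingPerms {M : Multiset ℕ} {π : List ℕ} :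
    π ∈ genStirlingPerms M ↔ (π : Multiset ℕ) = M ∧ IsGenStirling π := by
  rw [genStirlingPerms, mem_filter, mem_permutations_toList_toFinset]

theorem sum_jsPerms_eq_sum_genStirlingPerms {β : Type*} [AddCommMonoid β]
    (w : ℕ → ℕ → ℕ → β) {M : Multiset ℕ} (hM : ∀ v, M.count v ≤ 2)
    {F : ℕ → ℕ} (hF0 : F 0 = 0) (hF : StrictMonoOn F (insert 0 {v | v ∈ M})) :
    ∑ π ∈ jsPerms M, w (asc π) (des π) (plat π) =
      ∑ σ ∈ genStirlingPerms (M.map F), w (asc σ) (des σ) (plat σ) := by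
  set G := Function.invFunOn F (insert 0 {v | v ∈ M})
  have hGF : ∀ u ∈ M, G (F u) = u := fun u hu =>
    hF.injOn.leftInvOn_invFunOn (Set.mem_insert_of_mem _ hu)
  have hFG : ∀ v ∈ M.map F, F (G v) = v := fun v hv => by
    obtain ⟨u, hu, rfl⟩ := Multiset.mem_map.1 hv
    rw [hGF u hu]
  have hFπ (π : List ℕ) (hπ : (π : Multiset ℕ) = M) :
      StrictMonoOn F (insert 0 {v | v ∈ π}) := by
    subst hπ
    exact hF
  refine sum_nbij' (List.map F) (List.map G) ?_ ?_ ?_ ?_ ?_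
  · intro π hπ
    obtain ⟨hπM, hJS⟩ := mem_jsPerms.1 hπ
    refine mem_genStirlingPerms.2 ⟨by rw [← Multiset.map_coe, hπM], ?_⟩
    exact (isGenStirling_map_iff hF0 (hFπ π hπM)).2 hJS.isGenStirling
  · intro σ hσ
    obtain ⟨hσM, hGS⟩ := mem_genStirlingPerms.1 hσ
    have hπM : ((σ.map G : List ℕ) : Multiset ℕ) = M := by
      rw [← Multiset.map_coe, hσM, Multiset.map_map]
      exact (Multiset.map_congr rfl hGF).trans M.map_id
    have hσπ : (σ.map G).map F = σ := by
      rw [List.map_map]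
      exact (List.map_congr_left fun v hv => hFG v (hσM ▸ Multiset.mem_coe.2 hv)).trans σ.map_id
    refine mem_jsPerms.2 ⟨hπM, ?_⟩
    rw [← hσπ, isGenStirling_map_iff hF0 (hFπ _ hπM)] at hGS
    exact hGS.isJS fun v => by simpa only [← hπM, Multiset.coe_count] using hM v
  · intro π hπ
    rw [List.map_map]
    exact (List.map_congr_left fun u hu =>
      hGF u ((mem_jsPerms.1 hπ).1 ▸ Multiset.mem_coe.2 hu)).trans π.map_id
  · intro σ hσ
    rw [List.map_map]
    exact (List.map_congr_left fun v hv =>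
      hFG v ((mem_genStirlingPerms.1 hσ).1 ▸ Multiset.mem_coe.2 hv)).trans σ.map_id
  · intro π hπ
    have hF' := hFπ π (mem_jsPerms.1 hπ).1
    rw [asc_map hF0 hF', des_map hF0 hF', plat_map hF0 hF']

def rankIn (L : Finset ℕ) (k : ℕ) : ℕ := #{v ∈ L | v ≤ k}

section rankIn

variable {L : Finset ℕ}

lemma rankIn_lt_rankIn {a b : ℕ} (hb : b ∈ L) (hab : a < b) : rankIn L a < rankIn L b :=
  card_lt_card <| (ssubset_iff_of_subset (monotone_filter_right _ fun _ _ h => h.trans hab.le)).2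
    ⟨b, mem_filter.2 ⟨hb, le_rfl⟩, fun h => (mem_filter.1 h).2.not_gt hab⟩

lemma strictMonoOn_rankIn : StrictMonoOn (rankIn L) (insert 0 ↑L) := fun _ _ _ hb hab =>
  rankIn_lt_rankIn ((Set.mem_insert_iff.1 hb).resolve_left (Nat.ne_zero_of_lt hab)) hab

lemma rankIn_zero (h : 0 ∉ L) : rankIn L 0 = 0 :=
  card_eq_zero.2 <| filter_eq_empty_iff.2 fun _ hv h0 => h (Nat.le_zero.1 h0 ▸ hv)

lemma image_rankIn : L.image (rankIn L) = Icc 1 #L := by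
  refine eq_of_subset_of_card_le (fun k hk => ?_) ?_
  · obtain ⟨v, hv, rfl⟩ := mem_image.1 hk
    exact mem_Icc.2
      ⟨card_pos.2 ⟨v, mem_filter.2 ⟨hv, le_rfl⟩⟩, card_le_card (filter_subset _ _)⟩
  · rw [Nat.card_Icc, card_image_of_injOn (strictMonoOn_rankIn.injOn.mono (Set.subset_insert _ _))]
    omega

end rankIn

def evenLetters (n : ℕ) : Finset ℕ := univ.image fun i : Fin n => 2 * (i.1 + 1)

def oddLetters (n : ℕ) (S : Finset (Fin n)) : Finset ℕ := (univ \ S).image fun i => 2 * i.1 + 1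

section letters

variable {n : ℕ} {S : Finset (Fin n)}

lemma disjoint_evenLetters_oddLetters : Disjoint (evenLetters n) (oddLetters n S) := by
  simp only [evenLetters, oddLetters, disjoint_left, mem_image]
  omega

variable (n S) in
def letters : Finset ℕ :=
  (evenLetters n).disjUnion (oddLetters n S) disjoint_evenLetters_oddLetters

lemma evenLetters_val : (evenLetters n).val = univ.val.map fun i : Fin n => 2 * (i.1 + 1) :=
  image_val_of_injOn fun i _ j _ h => Fin.ext (by omega)

lemma oddLetters_val : (oddLetters n S).val = (univ \ S).val.map fun i => 2 * i.1 + 1 :=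
  image_val_of_injOn fun i _ j _ h => Fin.ext (by omega)

lemma MnS_eq : MnS n S = (evenLetters n).val + (letters n S).val := by
  have hsum : ∑ i : Fin n, Multiset.replicate 2 (2 * (i.1 + 1)) =
      (evenLetters n).val + (evenLetters n).val := by
    rw [evenLetters_val, ← Multiset.sum_map_singleton (univ.val.map _), Multiset.map_map,
      ← sum_eq_multiset_sum, ← sum_add_distrib]
    rfl
  rw [MnS, hsum, letters, disjUnion_val, oddLetters_val, add_assoc]

lemma count_MnS_le_two (v : ℕ) : (MnS n S).count v ≤ 2 := by
  rw [MnS_eq, Multiset.count_add]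
  exact add_le_add (Multiset.nodup_iff_count_le_one.1 (evenLetters n).nodup v)
    (Multiset.nodup_iff_count_le_one.1 (letters n S).nodup v)

lemma zero_notMem_letters : 0 ∉ letters n S := by
  simp [letters, evenLetters, oddLetters]

lemma mem_letters_of_mem_MnS {v : ℕ} (hv : v ∈ MnS n S) : v ∈ letters n S := by
  rw [MnS_eq, Multiset.mem_add] at hv
  exact hv.elim (fun h => mem_disjUnion.2 (Or.inl h)) id

lemma card_letters : #(letters n S) = 2 * n - #S := by
  have hS : #S ≤ n := by simpa using card_le_univ S
  rw [letters, card_disjUnion, evenLetters, oddLetters,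
    card_image_of_injective _ fun i j h => Fin.ext (by omega),
    card_image_of_injective _ fun i j h => Fin.ext (by omega), card_univ, card_univ_sdiff,
    Fintype.card_fin]
  omega

lemma rankIn_letters_two_mul {p : ℕ} (hp : p ≤ n) :
    rankIn (letters n S) (2 * p) = p + #{a : Fin n | a ∉ S ∧ a.1 + 1 ≤ p} := by
  rw [rankIn, letters, filter_disjUnion, card_disjUnion, evenLetters, oddLetters, filter_image,
    filter_image, card_image_of_injective _ fun i j h => Fin.ext (by omega),
    card_image_of_injective _ fun i j h => Fin.ext (by omega)]
  congr 1
  · rw [filter_congr fun i _ => show 2 * (i.1 + 1) ≤ 2 * p ↔ i.1 < p by omega,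
      Fin.card_filter_val_lt]
    exact min_eq_right hp
  · congr 1
    ext a
    simp only [mem_filter, mem_sdiff, mem_univ, true_and]
    exact and_congr_right fun _ => by omega

lemma mS_eq_ite (ℓ : Fin (2 * n - #S)) :
    mS n S ℓ = if ℓ.1 + 1 ∈ (evenLetters n).image (rankIn (letters n S)) then 2 else 1 := by
  unfold mS
  congr 1
  refine propext ?_
  simp only [evenLetters, image_image, mem_image, mem_univ, true_and, Function.comp_apply]
  constructor
  · rintro ⟨p, hp, hℓ⟩
    obtain ⟨hp1, hpn⟩ := mem_Icc.1 hp
    refine ⟨⟨p - 1, by omega⟩, ?_⟩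
    rw [Nat.sub_add_cancel hp1, rankIn_letters_two_mul hpn, hℓ]
  · rintro ⟨i, hi⟩
    exact ⟨i.1 + 1, mem_Icc.2 ⟨by omega, i.2⟩, by rw [← hi, rankIn_letters_two_mul i.2]⟩

end letters

lemma Mm_ite {N : ℕ} {T : Finset ℕ} (hT : T ⊆ Icc 1 N) :
    Mm (fun ℓ : Fin N => if ℓ.1 + 1 ∈ T then 2 else 1) = (Icc 1 N).val + T.val := by
  ext v
  rw [Mm, Multiset.count_sum', Multiset.count_add, Multiset.count_eq_of_nodup (Icc 1 N).nodup,
    Multiset.count_eq_of_nodup T.nodup]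
  simp only [Multiset.count_replicate, mem_val]
  by_cases hv : v ∈ Icc 1 N
  · have hv' := mem_Icc.1 hv
    rw [sum_eq_single ⟨v - 1, by omega⟩
      (fun i _ hi => if_neg fun h => hi (Fin.ext (by simp only; omega))) (absurd (mem_univ _))]
    simp only [Nat.sub_add_cancel hv'.1, if_true, if_pos hv]
    split_ifs <;> rfl
  · rw [sum_eq_zero fun i _ => if_neg fun h => hv (mem_Icc.2 (by omega)), if_neg hv,
      if_neg fun h => hv (hT h)]
    rfl

lemma Mm_mS_eq_map {n : ℕ} {S : Finset (Fin n)} :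
    Mm (mS n S) = (MnS n S).map (rankIn (letters n S)) := by
  have hinj := (strictMonoOn_rankIn (L := letters n S)).injOn.mono (Set.subset_insert 0 _)
  have hE : evenLetters n ⊆ letters n S := fun v hv => mem_disjUnion.2 (Or.inl hv)
  have hT : (evenLetters n).image (rankIn (letters n S)) ⊆ Icc 1 (2 * n - #S) := by
    rw [← card_letters, ← image_rankIn]
    exact image_subset_image hE
  rw [show mS n S = _ from funext mS_eq_ite, Mm_ite hT, MnS_eq, Multiset.map_add,
    ← image_val_of_injOn (hinj.mono hE), ← image_val_of_injOn hinj, image_rankIn, card_letters,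
    add_comm]

theorem jsp_eq_genstirling_general (n : ℕ) (S : Finset (Fin n)) (x y z : ℝ) :
    ∑ π ∈ JSPF n S, x ^ asc π * y ^ des π * z ^ plat π =
      ∑ π ∈ QF (mS n S), x ^ asc π * y ^ des π * z ^ plat π := by
  change ∑ π ∈ jsPerms (MnS n S), _ = ∑ π ∈ genStirlingPerms (Mm (mS n S)), _
  rw [Mm_mS_eq_map]
  exact sum_jsPerms_eq_sum_genStirlingPerms (fun a b c => x ^ a * y ^ b * z ^ c)
    count_MnS_le_two (rankIn_zero zero_notMem_letters)
    (strictMonoOn_rankIn.mono (Set.insert_subset_insert fun _ => mem_letters_of_mem_MnS))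

/-- `Jsp_{n,S}(x,y,z) = S_{m(S)}(x,y,z)`. -/
theorem jsp_eq_genstirling (n : ℕ) (hn : 1 ≤ n) (S : Finset (Fin n)) (x y z : ℝ) :
    ∑ π ∈ JSPF n S, x ^ asc π * y ^ des π * z ^ plat π =
      ∑ π ∈ QF (mS n S), x ^ asc π * y ^ des π * z ^ plat π :=
  jsp_eq_genstirling_general n S x y z

end
end

section
/- For any vector m = (m_1,…,m_n) of positive integers, the two quintuplets of statistics (sdes, mdes, fplat, uplat, asc) and (sdes, fplat, mdes, uplat, asc) are equidistributed on Q_m; equivalently, the joint distribution of (sdes, mdes, fplat, uplat, asc) over Q_m is symmetric under exchanging the statistics mdes and fplat. -/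
open scoped Classical

noncomputable section

/-!
Every `π ∈ Q_m` arises exactly once from some `σ ∈ Q_{m'}`, where `m'` drops the last entry `c`
of `m`, by inserting the block of all `c` copies of the largest letter `n + 1` into one of the
gaps of `σ`. Every gap of a nonempty Stirling permutation has exactly one kind: ascent, single
descent, multiple descent, first plateau, or unmovable plateau (which in a Stirling permutation
means a plateau whose letter occurred before), and `asc`, `sdes`, `mdes`, `fplat`, `uplat` count
the gaps of each kind. Inserting the block into a gap removes the contribution of that gap and
adds a vector that depends only on `c` and has equal `mdes` and `fplat` entries. So the multiset
of quintuples over `Q_m` is obtained from the one over `Q_{m'}` by a transition rule that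
commutes with exchanging the `mdes` and `fplat` coordinates, and the symmetry follows by
induction on `n`.
-/

namespace GenStirling

variable {π σ τ : List ℕ} {i j c L n : ℕ}

/-! ### Inserting a block of copies of a letter -/

def insertBlock (σ : List ℕ) (i c L : ℕ) : List ℕ := σ.take i ++ (List.replicate c L ++ σ.drop i)

lemma length_insertBlock (hi : i ≤ σ.length) : (insertBlock σ i c L).length = σ.length + c := by
  simp [insertBlock]; omega

lemma perm_insertBlock : (insertBlock σ i c L).Perm (σ ++ List.replicate c L) := by
  rw [insertBlock, ← List.take_append_drop i σ, List.append_assoc, List.take_append_drop]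
  exact (List.perm_append_comm).append_left _

lemma insertBlock_cons_succ (x : ℕ) :
    insertBlock (x :: σ) (i + 1) c L = x :: insertBlock σ i c L := rfl

lemma count_insertBlock_of_ne {x : ℕ} (hx : x ≠ L) : (insertBlock σ i c L).count x = σ.count x := by
  rw [perm_insertBlock.count_eq, List.count_append, List.count_replicate]
  simp [Ne.symm hx]

lemma count_insertBlock_self (hL : L ∉ σ) : (insertBlock σ i c L).count L = c := by
  rw [perm_insertBlock.count_eq, List.count_append, List.count_replicate_self,
    List.count_eq_zero.mpr hL, zero_add]

lemma getD_insertBlock (hi : i ≤ σ.length) (k : ℕ) :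
    (insertBlock σ i c L).getD k 0 =
      if k < i then σ.getD k 0 else if k < i + c then L else σ.getD (k - c) 0 := by
  simp only [insertBlock, List.getD_eq_getElem?_getD, List.getElem?_append, List.length_take,
    List.length_replicate, List.getElem?_take, List.getElem?_replicate, List.getElem?_drop,
    min_eq_left hi]
  split_ifs <;> first | rfl | omega | (congr 2; omega)

lemma ent_insertBlock (hi : i ≤ σ.length) (j : ℕ) :
    ent (insertBlock σ i c L) j =
      if j ≤ i then ent σ j else if j ≤ i + c then L else ent σ (j - c) := by
  unfold ent
  rw [getD_insertBlock hi]
  split_ifs <;> first | rfl | omega | (congr 1; omega)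

lemma ent_insertBlock_of_le (hi : i ≤ σ.length) (hj : j ≤ i) :
    ent (insertBlock σ i c L) j = ent σ j := by
  rw [ent_insertBlock hi, if_pos hj]

lemma ent_insertBlock_of_mem_block (hi : i ≤ σ.length) (h₁ : i < j) (h₂ : j ≤ i + c) :
    ent (insertBlock σ i c L) j = L := by
  rw [ent_insertBlock hi, if_neg (by omega), if_pos h₂]

lemma ent_insertBlock_add (hi : i ≤ σ.length) (hj : i < j) :
    ent (insertBlock σ i c L) (j + c) = ent σ j := by
  rw [ent_insertBlock hi, if_neg (by omega), if_neg (by omega), Nat.add_sub_cancel]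

lemma filter_insertBlock (hL : L ∉ σ) :
    (insertBlock σ i c L).filter (· ≠ L) = σ := by
  have hblock : (List.replicate c L).filter (· ≠ L) = [] := by simp
  rw [insertBlock, List.filter_append, List.filter_append, hblock, List.nil_append,
    ← List.filter_append, List.take_append_drop, List.filter_eq_self]
  exact fun x hx => by simpa using ne_of_mem_of_not_mem hx hL

lemma idxOf_insertBlock (hL : L ∉ σ) (hc : 0 < c) (hi : i ≤ σ.length) :
    (insertBlock σ i c L).idxOf L = i := by
  obtain ⟨c, rfl⟩ := Nat.exists_eq_add_of_lt hc
  rw [insertBlock, List.idxOf_append_of_notMem (fun h => hL (List.mem_of_mem_take h))]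
  simp [List.replicate_succ, min_eq_left hi]

/-! ### Generalized Stirling permutations -/

lemma _root_.IsGenStirling.sublist (hτ : IsGenStirling τ) (h : σ.Sublist τ) :
    IsGenStirling σ := by
  obtain ⟨f, hf⟩ := List.sublist_iff_exists_orderEmbedding_getElem?_eq.mp h
  have hgetD : ∀ k, σ.getD k 0 = τ.getD (f k) 0 := fun k => by
    simp only [List.getD_eq_getElem?_getD, hf k]
  intro r hr b hb a ha heq
  have hfr : f r < τ.length := by
    have := hf r
    rw [List.getElem?_eq_getElem hr, eq_comm, List.getElem?_eq_some_iff] at this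
    exact this.1
  rw [hgetD, hgetD] at heq ⊢
  exact hτ _ hfr _ (f.strictMono hb) _ (f.strictMono ha) heq

lemma _root_.IsGenStirling.of_cons {x : ℕ} (h : IsGenStirling (x :: σ)) : IsGenStirling σ :=
  h.sublist (List.sublist_cons_self x σ)

lemma _root_.IsGenStirling.of_insertBlock (h : IsGenStirling (insertBlock σ i c L)) :
    IsGenStirling σ := by
  refine h.sublist ?_
  conv_lhs => rw [← List.take_append_drop i σ]
  exact (List.sublist_append_right _ _).append_left _

lemma _root_.IsGenStirling.insertBlock (hσ : IsGenStirling σ) (hL : ∀ x ∈ σ, x < L)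
    (hi : i ≤ σ.length) : IsGenStirling (insertBlock σ i c L) := by
  have hval : ∀ k < σ.length, σ.getD k 0 < L := fun k hk =>
    hL _ (by rw [List.getD_eq_getElem _ _ hk]; exact List.getElem_mem hk)
  intro r hr b hb a ha heq
  rw [length_insertBlock hi] at hr
  simp only [getD_insertBlock hi] at heq ⊢
  -- off the block, positions correspond to positions of `σ`, and `L` exceeds every letter of `σ`
  split_ifs at heq ⊢ <;> first
    | omega
    | exact hσ _ (by omega) _ (by omega) _ (by omega) heq
    | (have := hval a (by omega); omega)
    | (have := hval (a - c) (by omega); omega)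
    | (have := hval (r - c) (by omega); omega)

lemma _root_.IsGenStirling.exists_insertBlock_eq (hπ : IsGenStirling π)
    (hmax : ∀ x ∈ π, x ≤ L) (hL : L ∈ π) :
    ∃ σ i, L ∉ σ ∧ i ≤ σ.length ∧ insertBlock σ i (π.count L) L = π := by
  induction π with
  | nil => simp at hL
  | cons x π ih =>
    by_cases hLπ : L ∈ π
    · obtain ⟨σ, i, hLσ, hi, hσπ⟩ :=
        ih hπ.of_cons (fun y hy => hmax y (List.mem_cons_of_mem _ hy)) hLπ
      by_cases hx : x = L
      · subst hx
        -- otherwise a letter `σ₀ < x` would sit between the leading `x` and the block of `x`s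
        have hi0 : i = 0 := by
          by_contra hi0
          have hc : 0 < π.count x := List.count_pos_iff.mpr hLπ
          generalize π.count x = c at hc hσπ
          have hy : σ.getD 0 0 ∈ σ := by
            rw [List.getD_eq_getElem _ _ (by omega)]; exact List.getElem_mem _
          have hlen := congrArg List.length hσπ
          rw [length_insertBlock hi] at hlen
          have h := hπ (i + 1) (by simp; omega) 1 (by omega) 0 (by omega)
          simp only [List.getD_cons_succ, List.getD_cons_zero, ← hσπ, getD_insertBlock hi,
            if_pos (Nat.pos_of_ne_zero hi0), lt_irrefl, if_false, if_pos (lt_add_of_pos_right i hc),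
            true_implies] at h
          exact ne_of_mem_of_not_mem hy hLσ (le_antisymm (hmax _ (List.mem_cons_of_mem _
            (hσπ ▸ perm_insertBlock.symm.subset (List.mem_append_left _ hy)))) h)
        subst hi0
        refine ⟨σ, 0, hLσ, Nat.zero_le _, ?_⟩
        rw [List.count_cons_self]
        conv_rhs => rw [← hσπ]
        simp [insertBlock, List.replicate_succ]
      · refine ⟨x :: σ, i + 1, ?_, by simpa using hi, ?_⟩
        · simp [hLσ, Ne.symm hx]
        · rw [List.count_cons_of_ne hx, insertBlock_cons_succ, hσπ]
    · have hx : x = L := by simpa [hLπ, eq_comm] using hL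
      subst hx
      refine ⟨π, 0, hLπ, Nat.zero_le _, ?_⟩
      simp [insertBlock, List.count_eq_zero.mpr hLπ]

/-! ### Decomposition of `Q_m` -/

lemma insertBlock_inj (hσ : L ∉ σ) (hτ : L ∉ τ) (hc : 0 < c)
    (hi : i ≤ σ.length) (hj : j ≤ τ.length) (h : insertBlock σ i c L = insertBlock τ j c L) :
    σ = τ ∧ i = j := by
  refine ⟨?_, ?_⟩
  · rw [← filter_insertBlock hσ (i := i) (c := c), h, filter_insertBlock hτ]
  · rw [← idxOf_insertBlock hσ hc hi, h, idxOf_insertBlock hτ hc hj]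

lemma mem_QF {mv : Fin n → ℕ} :
    π ∈ QF mv ↔ (π : Multiset ℕ) = Mm mv ∧ IsGenStirling π := by
  rw [QF, Finset.mem_filter, List.mem_toFinset, List.mem_permutations, ← Multiset.coe_eq_coe,
    Multiset.coe_toList]

lemma mem_Mm {mv : Fin n → ℕ} {x : ℕ} (hx : x ∈ Mm mv) : 1 ≤ x ∧ x ≤ n := by
  obtain ⟨k, -, hk⟩ := Multiset.mem_sum.mp hx
  obtain ⟨-, rfl⟩ := Multiset.mem_replicate.mp hk
  omega

lemma Mm_succ (mv : Fin (n + 1) → ℕ) :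
    Mm mv = Mm (Fin.init mv) + Multiset.replicate (mv (Fin.last n)) (n + 1) := by
  rw [Mm, Fin.sum_univ_castSucc]
  rfl

lemma QF_zero (mv : Fin 0 → ℕ) : QF mv = {[]} := by
  ext π
  simp only [mem_QF, Mm, Finset.univ_eq_empty, Finset.sum_empty, Multiset.coe_eq_zero,
    Finset.mem_singleton, and_iff_left_iff_imp]
  rintro rfl
  simp [IsGenStirling]

lemma mem_of_mem_QF {mv : Fin n → ℕ} (hπ : π ∈ QF mv) {x : ℕ} (hx : x ∈ π) :
    1 ≤ x ∧ x ≤ n :=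
  mem_Mm ((mem_QF.mp hπ).1 ▸ Multiset.mem_coe.mpr hx)

lemma mem_QF_succ_iff (mv : Fin (n + 1) → ℕ) (hc : 0 < mv (Fin.last n)) :
    π ∈ QF mv ↔ ∃ σ ∈ QF (Fin.init mv), ∃ i ≤ σ.length,
      insertBlock σ i (mv (Fin.last n)) (n + 1) = π := by
  have coe_insertBlock : ∀ σ i, (insertBlock σ i (mv (Fin.last n)) (n + 1) : Multiset ℕ) =
      σ + Multiset.replicate (mv (Fin.last n)) (n + 1) := fun σ i => by
    rw [Multiset.coe_eq_coe.mpr perm_insertBlock, ← Multiset.coe_add, Multiset.coe_replicate]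
  constructor
  · rintro hπ
    obtain ⟨hπM, hπS⟩ := mem_QF.mp hπ
    have hcount : π.count (n + 1) = mv (Fin.last n) := by
      rw [← Multiset.coe_count, hπM, Mm_succ, Multiset.count_add, Multiset.count_replicate_self,
        Multiset.count_eq_zero.mpr fun h => by have := (mem_Mm h).2; omega, zero_add]
    obtain ⟨σ, i, -, hi, hσπ⟩ := hπS.exists_insertBlock_eq
      (fun x hx => (mem_of_mem_QF hπ hx).2) (List.count_pos_iff.mp (hcount ▸ hc))
    rw [hcount] at hσπ
    subst hσπ
    refine ⟨σ, mem_QF.mpr ⟨?_, hπS.of_insertBlock⟩, i, hi, rfl⟩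
    rw [coe_insertBlock, Mm_succ] at hπM
    exact add_right_cancel hπM
  · rintro ⟨σ, hσ, i, hi, rfl⟩
    obtain ⟨hσM, hσS⟩ := mem_QF.mp hσ
    refine mem_QF.mpr ⟨by rw [coe_insertBlock, hσM, Mm_succ], hσS.insertBlock ?_ hi⟩
    exact fun x hx => Nat.lt_succ_of_le (mem_of_mem_QF hσ hx).2

lemma QF_val_succ (mv : Fin (n + 1) → ℕ) (hc : 0 < mv (Fin.last n)) :
    (QF mv).val = (QF (Fin.init mv)).val.bind fun σ =>
      (Multiset.range (σ.length + 1)).map fun i => insertBlock σ i (mv (Fin.last n)) (n + 1) := by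
  have hL : ∀ σ ∈ QF (Fin.init mv), n + 1 ∉ σ := fun σ hσ h => by
    have := (mem_of_mem_QF hσ h).2; omega
  rw [Multiset.Nodup.ext (QF mv).nodup]
  · intro π
    simp only [Finset.mem_val, mem_QF_succ_iff mv hc, Multiset.mem_bind, Multiset.mem_map,
      Multiset.mem_range, Nat.lt_succ_iff]
  · refine Multiset.nodup_bind.mpr ⟨fun σ hσ => (Multiset.nodup_range _).map_on ?_,
      (QF _).nodup.pairwise fun σ hσ τ hτ hne => Multiset.disjoint_left.mpr ?_⟩
    · intro i hi j hj h
      simp only [Multiset.mem_range] at hi hj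
      exact (insertBlock_inj (hL σ hσ) (hL σ hσ) hc (by omega) (by omega) h).2
    · simp only [Multiset.mem_map, Multiset.mem_range, not_exists, not_and]
      rintro π ⟨i, hi, rfl⟩ j hj h
      exact hne (insertBlock_inj (hL σ hσ) (hL τ hτ) hc (by omega) (by omega) h.symm).1

/-! ### Gaps and their kinds -/

@[simp] lemma ent_zero : ent π 0 = 0 := rfl

lemma ent_eq_getElem (h₁ : 1 ≤ j) (h₂ : j ≤ π.length) : ent π j = π[j - 1] := by
  rw [ent, if_neg (by omega), List.getD_eq_getElem]

lemma ent_mem (h₁ : 1 ≤ j) (h₂ : j ≤ π.length) : ent π j ∈ π := by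
  rw [ent_eq_getElem h₁ h₂]; exact List.getElem_mem _

lemma ent_eq_zero_of_length_lt (h : π.length < j) : ent π j = 0 := by
  rw [ent, if_neg (by omega), List.getD_eq_default _ _ (by omega)]

lemma ent_lt_of_forall_lt (hL : ∀ x ∈ π, x < L) (hL₀ : 0 < L) (j : ℕ) : ent π j < L := by
  rcases Nat.eq_zero_or_pos j with rfl | h₁
  · exact hL₀
  by_cases h₂ : j ≤ π.length
  · exact hL _ (ent_mem h₁ h₂)
  · rw [ent_eq_zero_of_length_lt (by omega)]; exact hL₀

lemma one_le_ent (hpos : ∀ x ∈ π, 1 ≤ x) (h₁ : 1 ≤ j) (h₂ : j ≤ π.length) : 1 ≤ ent π j :=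
  hpos _ (ent_mem h₁ h₂)

def IsRepeat (π : List ℕ) (j : ℕ) : Prop := ∃ k, 1 ≤ k ∧ k < j ∧ ent π k = ent π j

lemma isFirstPlateau_iff : IsFirstPlateau π j ↔ IsPlateau π j ∧ ¬ IsRepeat π j := by
  simp [IsFirstPlateau, IsRepeat]

lemma _root_.IsGenStirling.ent_le_ent_sub_one (hπ : IsGenStirling π) (hrep : IsRepeat π j)
    (hj : j ≤ π.length) : ent π j ≤ ent π (j - 1) := by
  obtain ⟨k, hk₁, hkj, hk⟩ := hrep
  rcases (show k ≤ j - 1 by omega).eq_or_lt with rfl | hlt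
  · exact hk.ge
  · simp only [ent, if_neg (show k ≠ 0 by omega), if_neg (show j ≠ 0 by omega),
      if_neg (show j - 1 ≠ 0 by omega)] at hk ⊢
    rw [← hk]
    exact hπ (j - 1) (by omega) (j - 1 - 1) (by omega) (k - 1) (by omega) (hk.trans (by congr 1))

lemma _root_.IsGenStirling.isUnmovablePlateau_iff (hπ : IsGenStirling π)
    (hpos : ∀ x ∈ π, 1 ≤ x) (h₁ : 1 ≤ j) (h₂ : j ≤ π.length) :
    IsUnmovablePlateau π j ↔ IsPlateau π j ∧ IsRepeat π j := by
  have hnot : ¬ IsRepeat π j ↔ ∀ k, 1 ≤ k → k < j → ent π k ≠ ent π j := by simp [IsRepeat]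
  constructor
  · rintro ⟨hP, hfree, hasc⟩
    refine ⟨hP, by_contra fun hrep => ?_⟩
    rcases lt_trichotomy (ent π (j - 1)) (ent π j) with hlt | heq | hgt
    · exact hasc ⟨hlt, hP⟩
    · rcases (show 1 ≤ j - 1 ∨ j = 1 by omega) with hj | rfl
      · exact hrep ⟨j - 1, hj, by omega, heq⟩
      · have := one_le_ent hpos h₁ h₂
        rw [Nat.sub_self, ent_zero] at heq
        omega
    · exact hfree ⟨hgt, hP, hnot.mp hrep⟩
  · rintro ⟨hP, hrep⟩
    refine ⟨hP, fun hfree => hnot.mpr hfree.2.2 hrep, fun hasc => ?_⟩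
    exact absurd (hπ.ent_le_ent_sub_one hrep h₂) (not_le.mpr hasc.1)

def stats (π : List ℕ) : Fin 5 → ℕ := ![sdes π, mdes π, fplat π, uplat π, asc π]

/-- The kind of the gap `j` (between `π_j` and `π_{j+1}`), as a unit vector in the coordinates of
`stats`. The plateau conditions agree with first and unmovable plateaux only for generalized
Stirling permutations. -/
def gapVec (π : List ℕ) (j : ℕ) : Fin 5 → ℕ :=
  ![if ent π (j + 1) < ent π j ∧ π.count (ent π j) = 1 then 1 else 0,
    if ent π (j + 1) < ent π j ∧ 2 ≤ π.count (ent π j) then 1 else 0,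
    if 1 ≤ j ∧ IsPlateau π j ∧ ¬ IsRepeat π j then 1 else 0,
    if 1 ≤ j ∧ IsPlateau π j ∧ IsRepeat π j then 1 else 0,
    if ent π j < ent π (j + 1) then 1 else 0]

lemma filter_range_eq_filter_idx1 (π : List ℕ) {p : ℕ → Prop} [DecidablePred p] (h₀ : ¬ p 0) :
    (Finset.range (π.length + 1)).filter p = (idx1 π).filter p := by
  ext j
  simp only [Finset.mem_filter, Finset.mem_range, idx1, Finset.mem_Icc]
  constructor
  · rintro ⟨hj, hp⟩
    exact ⟨⟨Nat.one_le_iff_ne_zero.mpr (by rintro rfl; exact h₀ hp), by omega⟩, hp⟩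
  · rintro ⟨hj, hp⟩
    exact ⟨by omega, hp⟩

lemma stats_eq_sum_gapVec (hπ : IsGenStirling π) (hpos : ∀ x ∈ π, 1 ≤ x) :
    stats π = ∑ j ∈ Finset.range (π.length + 1), gapVec π j := by
  ext k
  fin_cases k <;>
    simp only [stats, gapVec, Finset.sum_apply, Fin.zero_eta, Fin.isValue, Matrix.cons_val_zero,
      Fin.mk_one, Matrix.cons_val_one, Fin.reduceFinMk, Matrix.cons_val, Finset.sum_boole,
      Nat.cast_id]
  · rw [filter_range_eq_filter_idx1 π (by simp)]; rfl
  · rw [filter_range_eq_filter_idx1 π (by simp)]; rfl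
  · rw [filter_range_eq_filter_idx1 π (by simp), fplat]
    refine congrArg _ (Finset.filter_congr fun j hj => ?_)
    simp only [idx1, Finset.mem_Icc] at hj
    simp [hj.1, isFirstPlateau_iff]
  · rw [filter_range_eq_filter_idx1 π (by simp), uplat]
    refine congrArg _ (Finset.filter_congr fun j hj => ?_)
    simp only [idx1, Finset.mem_Icc] at hj
    simp [hj.1, hπ.isUnmovablePlateau_iff hpos hj.1 hj.2]
  · rfl

/-- What a block of `c ≥ 1` copies of a new largest letter contributes to `stats`: a
single or a multiple descent at its end, a first plateau and `c - 2` unmovable plateaux inside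
it, and the ascent into it. -/
def blockVec (c : ℕ) : Fin 5 → ℕ :=
  ![if c = 1 then 1 else 0, if 2 ≤ c then 1 else 0, if 2 ≤ c then 1 else 0, c - 2, 1]

lemma notMem_of_forall_ent_lt (hL : ∀ j, ent σ j < L) : L ∉ σ := fun h => by
  obtain ⟨k, hk, rfl⟩ := List.mem_iff_getElem.mp h
  exact (hL (k + 1)).ne (by rw [ent_eq_getElem (by omega) (by omega)]; rfl)

lemma isRepeat_insertBlock_of_le (hi : i ≤ σ.length) (hj : j ≤ i) :
    IsRepeat (insertBlock σ i c L) j ↔ IsRepeat σ j := by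
  unfold IsRepeat
  refine exists_congr fun k => and_congr_right fun _ => and_congr_right fun hkj => ?_
  rw [ent_insertBlock_of_le hi (by omega), ent_insertBlock_of_le hi hj]

lemma isRepeat_insertBlock_add (hi : i ≤ σ.length) (hL : ∀ j, ent σ j < L) (hj : i < j) :
    IsRepeat (insertBlock σ i c L) (j + c) ↔ IsRepeat σ j := by
  unfold IsRepeat
  rw [ent_insertBlock_add hi hj]
  constructor
  · rintro ⟨k, hk₁, hkj, hk⟩
    rcases le_or_gt k i with hki | hki
    · exact ⟨k, hk₁, by omega, by rwa [ent_insertBlock_of_le hi hki] at hk⟩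
    rcases le_or_gt k (i + c) with hkc | hkc
    · rw [ent_insertBlock_of_mem_block hi hki hkc] at hk
      exact absurd hk (hL j).ne'
    · refine ⟨k - c, by omega, by omega, ?_⟩
      rwa [← ent_insertBlock_add hi (show i < k - c by omega), Nat.sub_add_cancel (by omega)]
  · rintro ⟨k, hk₁, hkj, hk⟩
    rcases le_or_gt k i with hki | hki
    · exact ⟨k, hk₁, by omega, by rwa [ent_insertBlock_of_le hi hki]⟩
    · exact ⟨k + c, by omega, by omega, by rwa [ent_insertBlock_add hi hki]⟩

lemma gapVec_insertBlock_of_lt (hi : i ≤ σ.length) (hL : ∀ j, ent σ j < L) (hj : j < i) :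
    gapVec (insertBlock σ i c L) j = gapVec σ j := by
  have hP : IsPlateau (insertBlock σ i c L) j ↔ IsPlateau σ j := by
    rw [IsPlateau, IsPlateau, ent_insertBlock_of_le hi hj.le,
      ent_insertBlock_of_le hi (show j + 1 ≤ i by omega)]
  rw [gapVec, gapVec, hP, isRepeat_insertBlock_of_le hi hj.le, ent_insertBlock_of_le hi hj.le,
    ent_insertBlock_of_le hi (show j + 1 ≤ i by omega), count_insertBlock_of_ne (hL j).ne]

lemma gapVec_insertBlock_add (hi : i ≤ σ.length) (hL : ∀ j, ent σ j < L) (hj : i < j) :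
    gapVec (insertBlock σ i c L) (j + c) = gapVec σ j := by
  have e₁ : ent (insertBlock σ i c L) (j + c + 1) = ent σ (j + 1) := by
    rw [show j + c + 1 = j + 1 + c by omega, ent_insertBlock_add hi (show i < j + 1 by omega)]
  have hP : IsPlateau (insertBlock σ i c L) (j + c) ↔ IsPlateau σ j := by
    rw [IsPlateau, IsPlateau, ent_insertBlock_add hi hj, e₁]
  rw [gapVec, gapVec, hP, isRepeat_insertBlock_add hi hL hj, ent_insertBlock_add hi hj, e₁,
    count_insertBlock_of_ne (hL j).ne]
  simp only [show 1 ≤ j + c by omega, show 1 ≤ j by omega, true_and]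

lemma gapVec_insertBlock_self (hi : i ≤ σ.length) (hL : ∀ j, ent σ j < L) (hc : 0 < c) :
    gapVec (insertBlock σ i c L) i = Pi.single 4 1 := by
  have e₀ : ent (insertBlock σ i c L) i = ent σ i := ent_insertBlock_of_le hi le_rfl
  have e₁ : ent (insertBlock σ i c L) (i + 1) = L :=
    ent_insertBlock_of_mem_block hi (lt_add_one i) (by omega)
  have := hL i
  ext k
  fin_cases k <;> simp [gapVec, IsPlateau, e₀, e₁, this, this.ne, this.le]

lemma gapVec_insertBlock_succ (hi : i ≤ σ.length) (hL : ∀ j, ent σ j < L) (hc : 1 < c) :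
    gapVec (insertBlock σ i c L) (i + 1) = Pi.single 2 1 := by
  have e₁ : ent (insertBlock σ i c L) (i + 1) = L :=
    ent_insertBlock_of_mem_block hi (lt_add_one i) (by omega)
  have e₂ : ent (insertBlock σ i c L) (i + 1 + 1) = L :=
    ent_insertBlock_of_mem_block hi (by omega) (by omega)
  have hrep : ¬ IsRepeat (insertBlock σ i c L) (i + 1) := by
    rintro ⟨k, -, hk, h⟩
    rw [ent_insertBlock_of_le hi (by omega), e₁] at h
    exact (hL k).ne h
  ext k
  fin_cases k <;> simp [gapVec, IsPlateau, e₁, e₂, hrep]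

lemma gapVec_insertBlock_of_mem_block (hi : i ≤ σ.length) (h₁ : i + 1 < j) (h₂ : j < i + c) :
    gapVec (insertBlock σ i c L) j = Pi.single 3 1 := by
  have e₁ : ent (insertBlock σ i c L) j = L := ent_insertBlock_of_mem_block hi (by omega) (by omega)
  have e₂ : ent (insertBlock σ i c L) (j + 1) = L :=
    ent_insertBlock_of_mem_block hi (by omega) (by omega)
  have hrep : IsRepeat (insertBlock σ i c L) j :=
    ⟨i + 1, by omega, h₁, by rw [e₁, ent_insertBlock_of_mem_block hi (by omega) (by omega)]⟩
  ext k
  fin_cases k <;> simp [gapVec, IsPlateau, e₁, e₂, hrep, show 1 ≤ j by omega]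

lemma gapVec_insertBlock_blockEnd (hi : i ≤ σ.length) (hL : ∀ j, ent σ j < L) (hc : 0 < c) :
    gapVec (insertBlock σ i c L) (i + c) = Pi.single (if c = 1 then 0 else 1) 1 := by
  have e₁ : ent (insertBlock σ i c L) (i + c) = L :=
    ent_insertBlock_of_mem_block hi (by omega) le_rfl
  have e₂ : ent (insertBlock σ i c L) (i + c + 1) = ent σ (i + 1) := by
    rw [← ent_insertBlock_add hi (lt_add_one i)]; congr 1; omega
  have hcount := count_insertBlock_self (i := i) (c := c) (notMem_of_forall_ent_lt hL)
  have := hL (i + 1)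
  rcases eq_or_ne c 1 with rfl | h1
  all_goals ext k; fin_cases k <;> simp [gapVec, IsPlateau, this.ne', *] <;> omega

/-- `F` is `G` with the term `G i` replaced by the block `F i, …, F (i + c)`. -/
lemma sum_range_splice {M : Type*} [AddCommMonoid M] {F G : ℕ → M} (hi : i ≤ n)
    (hlow : ∀ j < i, F j = G j) (hhigh : ∀ j, i < j → F (j + c) = G j) :
    ∑ j ∈ Finset.range (n + c + 1), F j + G i =
      ∑ j ∈ Finset.range (n + 1), G j + ∑ j ∈ Finset.Ico i (i + c + 1), F j := by
  have hhead : ∑ j ∈ Finset.range i, F j = ∑ j ∈ Finset.range i, G j :=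
    Finset.sum_congr rfl fun j hj => hlow j (Finset.mem_range.mp hj)
  have htail : ∑ j ∈ Finset.Ico (i + c + 1) (n + c + 1), F j =
      ∑ j ∈ Finset.Ico (i + 1) (n + 1), G j := by
    rw [show i + c + 1 = i + 1 + c by omega, show n + c + 1 = n + 1 + c by omega,
      ← Finset.sum_Ico_add']
    exact Finset.sum_congr rfl fun j hj => hhigh j (by simp at hj; omega)
  rw [← Finset.sum_range_add_sum_Ico _ (show i + c + 1 ≤ n + c + 1 by omega),
    ← Finset.sum_range_add_sum_Ico _ (show i ≤ i + c + 1 by omega), hhead, htail,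
    ← Finset.sum_range_add_sum_Ico _ (show i + 1 ≤ n + 1 by omega), Finset.sum_range_succ]
  abel

lemma sum_gapVec_insertBlock_block (hi : i ≤ σ.length) (hL : ∀ j, ent σ j < L) (hc : 0 < c) :
    ∑ j ∈ Finset.Ico i (i + c + 1), gapVec (insertBlock σ i c L) j = blockVec c := by
  obtain rfl | ⟨c, rfl⟩ : c = 1 ∨ ∃ c', c = c' + 2 := by
    rcases c with _ | _ | c <;> simp_all
  · rw [Finset.sum_Ico_succ_top (by omega), Finset.sum_Ico_succ_top le_rfl, Finset.Ico_self,
      Finset.sum_empty, zero_add, gapVec_insertBlock_self hi hL hc,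
      gapVec_insertBlock_blockEnd hi hL hc]
    ext k
    fin_cases k <;> simp [blockVec]
  · have hmid : ∑ j ∈ Finset.Ico (i + 2) (i + c + 2), gapVec (insertBlock σ i (c + 2) L) j =
        c • Pi.single 3 1 := by
      rw [Finset.sum_congr rfl fun j hj => gapVec_insertBlock_of_mem_block hi
        (by simp at hj; omega) (by simp at hj; omega), Finset.sum_const, Nat.card_Ico]
      congr 1; omega
    have hend := gapVec_insertBlock_blockEnd hi hL hc
    rw [show i + (c + 2) = i + c + 2 by omega] at hend
    rw [show i + (c + 2) + 1 = i + c + 2 + 1 by omega, Finset.sum_Ico_succ_top (by omega), hend,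
      Finset.sum_eq_sum_Ico_succ_bot (by omega), gapVec_insertBlock_self hi hL hc,
      Finset.sum_eq_sum_Ico_succ_bot (by omega), gapVec_insertBlock_succ hi hL (by omega), hmid]
    ext k
    fin_cases k <;> simp [blockVec]

lemma stats_insertBlock_add_gapVec (hσ : IsGenStirling σ) (hpos : ∀ x ∈ σ, 1 ≤ x)
    (hL : ∀ x ∈ σ, x < L) (hL₀ : 0 < L) (hc : 0 < c) (hi : i ≤ σ.length) :
    stats (insertBlock σ i c L) + gapVec σ i = stats σ + blockVec c := by
  have hent := ent_lt_of_forall_lt hL hL₀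
  have hpos' : ∀ x ∈ insertBlock σ i c L, 1 ≤ x := fun x hx => by
    rcases List.mem_append.mp (perm_insertBlock.subset hx) with h | h
    · exact hpos x h
    · rw [List.eq_of_mem_replicate h]; exact hL₀
  rw [stats_eq_sum_gapVec (hσ.insertBlock hL hi) hpos', stats_eq_sum_gapVec hσ hpos,
    length_insertBlock hi, sum_range_splice hi (fun j hj => gapVec_insertBlock_of_lt hi hent hj)
      (fun j hj => gapVec_insertBlock_add hi hent hj), sum_gapVec_insertBlock_block hi hent hc]

lemma exists_gapVec_eq_single (hpos : ∀ x ∈ π, 1 ≤ x) (hne : π ≠ []) (hj : j ≤ π.length) :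
    ∃ k, gapVec π j = Pi.single k 1 := by
  rcases lt_trichotomy (ent π j) (ent π (j + 1)) with h | h | h
  · refine ⟨4, ?_⟩
    ext k; fin_cases k <;> simp [gapVec, IsPlateau, h, h.ne, h.not_gt]
  · have hj₁ : 1 ≤ j := by
      by_contra h₀
      obtain rfl : j = 0 := by omega
      have := one_le_ent hpos le_rfl (List.length_pos_of_ne_nil hne)
      simp only [ent_zero, zero_add] at h
      omega
    by_cases hrep : IsRepeat π j
    · refine ⟨3, ?_⟩
      ext k; fin_cases k <;> simp [gapVec, IsPlateau, h, hj₁, hrep]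
    · refine ⟨2, ?_⟩
      ext k; fin_cases k <;> simp [gapVec, IsPlateau, h, hj₁, hrep]
  · have hj₁ : 1 ≤ j := by
      by_contra h₀
      obtain rfl : j = 0 := by omega
      simp at h
    have hcount : 0 < π.count (ent π j) := List.count_pos_iff.mpr (ent_mem hj₁ hj)
    rcases (show π.count (ent π j) = 1 ∨ 2 ≤ π.count (ent π j) by omega) with h₁ | h₂
    · refine ⟨0, ?_⟩
      ext k; fin_cases k <;> simp [gapVec, IsPlateau, h, h.ne', h.not_gt, h₁]
    · refine ⟨1, ?_⟩
      ext k
      fin_cases k <;>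
        simp [gapVec, IsPlateau, h, h.ne', h.not_gt, h₂, show π.count (ent π j) ≠ 1 by omega]

lemma gapVec_nil : gapVec [] 0 = 0 := by
  ext k; fin_cases k <;> simp [gapVec, IsPlateau, ent]

lemma stats_nil : stats [] = 0 := by
  rw [stats_eq_sum_gapVec (by simp [IsGenStirling]) (by simp)]
  simp [gapVec_nil]

/-! ### Induction on the number of letters -/

section profile

variable {ι : Type*} [Fintype ι] [DecidableEq ι]

lemma eq_sum_replicate_single {M : Multiset (ι → ℕ)} (h : ∀ x ∈ M, ∃ k, x = Pi.single k 1) :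
    M = ∑ k, Multiset.replicate (M.sum k) (Pi.single k 1) := by
  induction M using Multiset.induction_on with
  | empty => simp
  | cons a M ih =>
    obtain ⟨k₀, rfl⟩ := h a (Multiset.mem_cons_self _ _)
    conv_lhs => rw [ih fun x hx => h x (Multiset.mem_cons_of_mem hx)]
    simp only [Multiset.sum_cons, Pi.add_apply, Multiset.replicate_add, Finset.sum_add_distrib]
    have hsingle : ∑ k, Multiset.replicate (Pi.single (M := fun _ => ℕ) k₀ 1 k) (Pi.single k 1) =
        {Pi.single k₀ 1} := by
      rw [Fintype.sum_eq_single k₀ fun k hk => by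
          rw [Pi.single_eq_of_ne hk, Multiset.replicate_zero],
        Pi.single_eq_same, Multiset.replicate_one]
    rw [hsingle, Multiset.singleton_add]

/-- The kinds of the gaps of a word with statistics `w`: a nonempty word has `w k` gaps of kind
`k`, the empty word has one gap, of no kind. -/
def gapProfile (w : ι → ℕ) : Multiset (ι → ℕ) :=
  if w = 0 then {0} else ∑ k, Multiset.replicate (w k) (Pi.single k 1)

lemma gapProfile_comp (e : Equiv.Perm ι) (w : ι → ℕ) :
    gapProfile (w ∘ e) = (gapProfile w).map (· ∘ e) := by
  by_cases hw : w = 0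
  · subst hw
    simp [gapProfile]
  have hwe : w ∘ e ≠ 0 := fun h => hw (by ext k; simpa using congrFun h (e.symm k))
  rw [gapProfile, if_neg hwe, gapProfile, if_neg hw, ← Multiset.coe_mapAddMonoidHom, map_sum,
    ← (Equiv.sum_comp e.symm)]
  simp [Multiset.map_replicate, Pi.single_comp_equiv]

end profile

lemma map_bind_eq_self {α : Type*} {S : Multiset α} {f : α → Multiset α} {e : α → α}
    (hS : S.map e = S) (hf : ∀ a, f (e a) = (f a).map e) : (S.bind f).map e = S.bind f :=
  calc (S.bind f).map e = S.bind fun a => (f a).map e := Multiset.map_bind _ _ _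
    _ = S.bind fun a => f (e a) := by simp_rw [hf]
    _ = S.bind f := by rw [← Multiset.bind_map, hS]

/-- The statistics of the words obtained from a word with statistics `w` by inserting a block of
`c` copies of a new largest letter, one for each gap. -/
def successors (c : ℕ) (w : Fin 5 → ℕ) : Multiset (Fin 5 → ℕ) :=
  (gapProfile w).map fun g => w + blockVec c - g

lemma successors_comp (e : Equiv.Perm (Fin 5)) (he : blockVec c ∘ e = blockVec c)
    (w : Fin 5 → ℕ) : successors c (w ∘ e) = (successors c w).map (· ∘ e) := by
  rw [successors, successors, gapProfile_comp, Multiset.map_map, Multiset.map_map]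
  refine Multiset.map_congr rfl fun g _ => ?_
  ext k
  simp [← congrFun he k]

lemma map_gapVec_range (hσ : IsGenStirling σ) (hpos : ∀ x ∈ σ, 1 ≤ x) :
    (Multiset.range (σ.length + 1)).map (gapVec σ) = gapProfile (stats σ) := by
  rcases eq_or_ne σ [] with rfl | hne
  · simp [gapProfile, stats_nil, gapVec_nil]
  have hsum : ((Multiset.range (σ.length + 1)).map (gapVec σ)).sum = stats σ :=
    (stats_eq_sum_gapVec hσ hpos).symm
  have hasc : stats σ ≠ 0 := fun h => by
    have hasc : 0 < asc σ := Finset.card_pos.mpr ⟨0, Finset.mem_filter.mpr ⟨by simp [idx0],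
      by rw [ent_zero]; exact one_le_ent hpos le_rfl (List.length_pos_of_ne_nil hne)⟩⟩
    simpa [stats, hasc.ne'] using congrFun h 4
  rw [gapProfile, if_neg hasc, ← hsum]
  refine eq_sum_replicate_single fun x hx => ?_
  obtain ⟨j, hj, rfl⟩ := Multiset.mem_map.mp hx
  exact exists_gapVec_eq_single hpos hne (Nat.lt_succ_iff.mp (Multiset.mem_range.mp hj))

lemma map_stats_insertBlock (hσ : IsGenStirling σ) (hpos : ∀ x ∈ σ, 1 ≤ x)
    (hL : ∀ x ∈ σ, x < L) (hL₀ : 0 < L) (hc : 0 < c) :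
    (Multiset.range (σ.length + 1)).map (fun i => stats (insertBlock σ i c L)) =
      successors c (stats σ) := by
  rw [successors, ← map_gapVec_range hσ hpos, Multiset.map_map]
  refine Multiset.map_congr rfl fun i hi => ?_
  rw [Function.comp_apply, ← stats_insertBlock_add_gapVec hσ hpos hL hL₀ hc
    (Nat.lt_succ_iff.mp (Multiset.mem_range.mp hi)), add_tsub_cancel_right]

lemma map_stats_QF_succ (mv : Fin (n + 1) → ℕ) (hpos : ∀ i, 0 < mv i) :
    (QF mv).val.map stats =
      ((QF (Fin.init mv)).val.map stats).bind (successors (mv (Fin.last n))) := by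
  rw [QF_val_succ mv (hpos _), Multiset.map_bind, Multiset.bind_map]
  refine Multiset.bind_congr fun σ hσ => ?_
  rw [Multiset.map_map]
  exact map_stats_insertBlock (mem_QF.mp hσ).2 (fun x hx => (mem_of_mem_QF hσ hx).1)
    (fun x hx => Nat.lt_succ_of_le (mem_of_mem_QF hσ hx).2) n.succ_pos (hpos _)

theorem map_comp_map_stats_QF (e : Equiv.Perm (Fin 5)) (he : ∀ c, blockVec c ∘ e = blockVec c) :
    ∀ {n : ℕ} (mv : Fin n → ℕ), (∀ i, 0 < mv i) →
      ((QF mv).val.map stats).map (· ∘ e) = (QF mv).val.map stats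
  | 0, mv, _ => by simp [QF_zero, stats_nil]
  | n + 1, mv, hpos => by
    rw [map_stats_QF_succ mv hpos]
    exact map_bind_eq_self (map_comp_map_stats_QF e he _ fun i => hpos _)
      (successors_comp e (he _))

lemma card_filter_eq_count_map {α β : Type*} [DecidableEq β] (s : Finset α) (f : α → β) (b : β)
    (p : α → Prop) [DecidablePred p] (hp : ∀ a, p a ↔ f a = b) :
    (s.filter p).card = (s.val.map f).count b := by
  rw [Multiset.count_map, Finset.card, Finset.filter_val]
  exact congrArg _ (Multiset.filter_congr fun a _ => (hp a).trans eq_comm)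

end GenStirling

/-- the quintuples `(sdes, mdes, fplat, uplat, asc)` and
`(sdes, fplat, mdes, uplat, asc)` are equidistributed on `Q_m`; i.e. the joint
distribution is symmetric under exchanging `mdes` and `fplat`. -/
theorem stirling_quintuple_equidistribution {n : ℕ} (mv : Fin n → ℕ)
    (hpos : ∀ i, 0 < mv i) (v₁ v₂ v₃ v₄ v₅ : ℕ) :
    ((QF mv).filter fun π =>
        sdes π = v₁ ∧ mdes π = v₂ ∧ fplat π = v₃ ∧ uplat π = v₄ ∧ asc π = v₅).card =
      ((QF mv).filter fun π =>
        sdes π = v₁ ∧ fplat π = v₂ ∧ mdes π = v₃ ∧ uplat π = v₄ ∧ asc π = v₅).card := by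
  let e : Equiv.Perm (Fin 5) := Equiv.swap 1 2
  have he : ∀ c, GenStirling.blockVec c ∘ e = GenStirling.blockVec c := fun c => by
    ext k; fin_cases k <;> rfl
  let v : Fin 5 → ℕ := ![v₁, v₂, v₃, v₄, v₅]
  rw [GenStirling.card_filter_eq_count_map _ GenStirling.stats v _ fun π => by
      simp [GenStirling.stats, v, funext_iff, Fin.forall_fin_succ],
    GenStirling.card_filter_eq_count_map _ GenStirling.stats (v ∘ e) _ fun π => by
      simp [GenStirling.stats, v, e, funext_iff, Fin.forall_fin_succ,
        Equiv.swap_apply_of_ne_of_ne, and_left_comm],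
    ← Multiset.count_map_eq_count' _ _ e.surjective.injective_comp_right,
    GenStirling.map_comp_map_stats_QF e he mv hpos]

end
end

section
/- Let p(x,y,z) = Σ_{i=0}^{d} s_i(x,y) z^i be a stable real polynomial. Then for every 0 ≤ k ≤ d, the coefficient polynomial s_k(x,y) is stable. -/
/-!
Up to the factor `k!`, `s_k` is `∂ᵏp/∂zᵏ` at `z = 0`. Stability survives partial derivatives and
setting a variable to a real value, because both are limits of stable families: `t p + ∂p` for
real `t → 0` (on each coordinate line `p'/p = ∑ 1/(z - r)` lies in the lower half plane, so
`t + p'/p ≠ 0`), and `p(w, a + i t)` for `t → 0⁺`. By Hurwitz's theorem such a limit is nonvanishing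
on the upper half space or identically zero. On a complex line through a zero of the limit,
Hurwitz's theorem follows from the fact that a polynomial without zeros in the disc of radius `r`
has `‖coeff k‖ rᵏ ≤ C(deg, k) ‖coeff 0‖`.
-/

open scoped Classical

noncomputable section

/-- A real multivariate polynomial is *stable* if it is identically zero or it does not
vanish whenever all variables lie in the open upper half plane. -/
def IsStable {n : ℕ} (p : MvPolynomial (Fin n) ℝ) : Prop :=
  p = 0 ∨ ∀ z : Fin n → ℂ, (∀ i, 0 < (z i).im) → (MvPolynomial.aeval z) p ≠ 0

open Polynomial Filter Topology

theorem im_sum_one_div_sub_neg {z : ℂ} (hz : 0 < z.im) {s : Multiset ℂ}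
    (hs : ∀ r ∈ s, r.im ≤ 0) (hs₀ : s ≠ 0) : ((s.map fun r ↦ 1 / (z - r)).sum).im < 0 := by
  induction s using Multiset.induction_on with
  | empty => exact absurd rfl hs₀
  | cons a s ih =>
    have hza : 0 < (z - a).im := by
      rw [Complex.sub_im]; linarith [hs a (Multiset.mem_cons_self a s)]
    have ha : (1 / (z - a)).im < 0 := by
      rw [one_div, Complex.inv_im]
      exact div_neg_of_neg_of_pos (neg_neg_of_pos hza)
        (Complex.normSq_pos.mpr fun h ↦ by simp [h] at hza)
    rw [Multiset.map_cons, Multiset.sum_cons, Complex.add_im]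
    rcases eq_or_ne s 0 with rfl | hs'
    · simpa using ha
    · linarith [ih (fun r hr ↦ hs r (Multiset.mem_cons_of_mem hr)) hs']

namespace Polynomial

/-- `f' / f = ∑ 1 / (z - r)` over the roots `r` of `f`; each term lies in the open lower half
plane, so `f' / f` can only be real if `f` has no roots, and then it vanishes. -/
theorem eval_C_mul_add_derivative_ne_zero {f : ℂ[X]} (hf : ∀ z : ℂ, 0 < z.im → f.eval z ≠ 0)
    {t : ℝ} (ht : t ≠ 0) {z : ℂ} (hz : 0 < z.im) : (C (t : ℂ) * f + derivative f).eval z ≠ 0 := by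
  have hfz := hf z hz
  have hroots : ∀ r ∈ f.roots, r.im ≤ 0 := fun r hr ↦
    not_lt.mp fun h ↦ hf r h (isRoot_of_mem_roots hr)
  have hlog := (IsAlgClosed.splits f).eval_derivative_div_eval_of_ne_zero hfz
  rw [eval_add, eval_mul, eval_C]
  intro h
  have hquot : (derivative f).eval z / f.eval z = -t := by
    rw [div_eq_iff hfz]; linear_combination h
  rcases eq_or_ne f.roots 0 with h₀ | h₀
  · rw [hquot, h₀] at hlog
    simp only [Multiset.map_zero, Multiset.sum_zero, neg_eq_zero, Complex.ofReal_eq_zero] at hlog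
    exact ht hlog
  · have := im_sum_one_div_sub_neg hz hroots h₀
    rw [← hlog, hquot] at this
    simp at this

/-- The roots of `C (g 0)⁻¹ * g.reverse` are the inverses of the roots of `g`, so the bound on
the coefficients of a monic polynomial in terms of its roots applies to it. -/
theorem norm_coeff_mul_pow_le {g : ℂ[X]} {r : ℝ} (hr : 0 < r)
    (hg : ∀ u : ℂ, ‖u‖ < r → g.eval u ≠ 0) (k : ℕ) :
    ‖g.coeff k‖ * r ^ k ≤ g.natDegree.choose k * ‖g.coeff 0‖ := by
  rcases eq_or_ne g 0 with rfl | hg0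
  · simp
  rcases lt_or_ge g.natDegree k with hk | hk
  · rw [coeff_eq_zero_of_natDegree_lt hk, norm_zero, zero_mul]; positivity
  have h0 : g.coeff 0 ≠ 0 := by rw [coeff_zero_eq_eval_zero]; exact hg 0 (by simpa)
  have htrail : g.natTrailingDegree = 0 := natTrailingDegree_eq_zero.mpr (Or.inr h0)
  set m := C (g.coeff 0)⁻¹ * g.reverse
  have hm : m.Monic := by
    refine monic_C_mul_of_mul_leadingCoeff_eq_one ?_
    rw [reverse_leadingCoeff, trailingCoeff, htrail, inv_mul_cancel₀ h0]
  have hdeg : m.natDegree = g.natDegree := by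
    rw [natDegree_C_mul (inv_ne_zero h0), reverse_natDegree, htrail, Nat.sub_zero]
  have hroots : ∀ z ∈ (m.map (RingHom.id ℂ)).roots, ‖z‖ ≤ r⁻¹ := by
    intro z hz
    rw [Polynomial.map_id] at hz
    have hz' : g.reverse.eval z = 0 := by simpa [m, h0] using isRoot_of_mem_roots hz
    have hz0 : z ≠ 0 := by
      rintro rfl
      rw [← coeff_zero_eq_eval_zero, coeff_zero_reverse] at hz'
      exact hg0 (leadingCoeff_eq_zero.mp hz')
    let := invertibleOfNonzero (inv_ne_zero hz0)
    have hroot : g.eval z⁻¹ = 0 := by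
      rw [← eval₂_id, ← eval₂_reverse_eq_zero_iff, invOf_eq_inv, inv_inv, eval₂_id]
      exact hz'
    have := not_lt.mp fun h ↦ hg _ h hroot
    rw [norm_inv] at this
    exact (le_inv_comm₀ hr (norm_pos_iff.mpr hz0)).mp this
  have key := coeff_le_of_roots_le (g.natDegree - k) hm (IsAlgClosed.splits _) hroots
  rw [Polynomial.map_id, hdeg, Nat.sub_sub_self hk, Nat.choose_symm hk, coeff_C_mul,
    coeff_reverse, revAt_le (Nat.sub_le _ _), Nat.sub_sub_self hk, norm_mul, norm_inv,
    inv_pow, inv_mul_le_iff₀ (norm_pos_iff.mpr h0)] at key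
  calc ‖g.coeff k‖ * r ^ k ≤ ‖g.coeff 0‖ * ((r ^ k)⁻¹ * g.natDegree.choose k) * r ^ k := by
        gcongr
    _ = _ := by field_simp

/-- Hurwitz's theorem for polynomials of bounded degree. -/
theorem eval_zero_ne_zero_of_tendsto_coeff {α : Type*} {l : Filter α} [l.NeBot] {g : α → ℂ[X]}
    {g₀ : ℂ[X]} (hg₀ : g₀ ≠ 0) {D : ℕ} (hdeg : ∀ a, (g a).natDegree ≤ D)
    (hcoeff : ∀ k, Tendsto (fun a ↦ (g a).coeff k) l (𝓝 (g₀.coeff k))) {r : ℝ} (hr : 0 < r)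
    (hroots : ∀ᶠ a in l, ∀ u : ℂ, ‖u‖ < r → (g a).eval u ≠ 0) : g₀.eval 0 ≠ 0 := by
  intro h0
  obtain ⟨k, hk⟩ : ∃ k, g₀.coeff k ≠ 0 := by
    by_contra! h; exact hg₀ (Polynomial.ext h)
  have hbound : ∀ᶠ a in l, ‖(g a).coeff k‖ * r ^ k ≤ 2 ^ D * ‖(g a).coeff 0‖ := by
    filter_upwards [hroots] with a ha
    calc ‖(g a).coeff k‖ * r ^ k ≤ (g a).natDegree.choose k * ‖(g a).coeff 0‖ :=
          norm_coeff_mul_pow_le hr ha k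
      _ ≤ 2 ^ D * ‖(g a).coeff 0‖ := by
          gcongr
          exact_mod_cast (Nat.choose_le_two_pow _ _).trans (Nat.pow_le_pow_right two_pos (hdeg a))
  have hlim := le_of_tendsto_of_tendsto ((hcoeff k).norm.mul_const _)
    ((hcoeff 0).norm.const_mul _) hbound
  rw [coeff_zero_eq_eval_zero, h0, norm_zero, mul_zero] at hlim
  exact hk (norm_le_zero_iff.mp (nonpos_of_mul_nonpos_left hlim (by positivity)))

end Polynomial

namespace MvPolynomial

section ComplexAlgebra

variable {R : Type*} [CommSemiring R] [Algebra R ℂ]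

theorem eval_aeval_update {σ : Type*} [DecidableEq σ] (p : MvPolynomial σ R) (w : σ → ℂ) (i : σ)
    (ζ : ℂ) :
    (aeval (Function.update (fun j ↦ Polynomial.C (w j)) i Polynomial.X) p).eval ζ =
      aeval (Function.update w i ζ) p := by
  rw [← Polynomial.coe_aeval_eq_eval, ← AlgHom.restrictScalars_apply R, comp_aeval_apply]
  congr 2
  funext j
  by_cases h : j = i
  · subst h; simp
  · simp [Function.update_of_ne h]

theorem derivative_aeval_update {σ : Type*} [DecidableEq σ] (p : MvPolynomial σ R) (w : σ → ℂ)
    (i : σ) :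
    derivative (aeval (Function.update (fun j ↦ Polynomial.C (w j)) i Polynomial.X) p) =
      aeval (Function.update (fun j ↦ Polynomial.C (w j)) i Polynomial.X) (pderiv i p) := by
  induction p using MvPolynomial.induction_on with
  | C a => simp
  | add p q hp hq => simp [hp, hq]
  | mul_X p j hp =>
    rw [map_mul, derivative_mul, hp, Derivation.leibniz, pderiv_X]
    by_cases h : j = i
    · subst h; simp [mul_comm, add_comm]
    · simp [h, mul_comm]

theorem eval_map_aeval_snoc_line {n : ℕ} (F : MvPolynomial (Fin (n + 1)) R) (w₀ v : Fin n → ℂ)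
    (t u : ℂ) :
    ((aeval (Fin.snoc (fun j ↦ Polynomial.C (Polynomial.C (w₀ j)) +
        Polynomial.C (Polynomial.C (v j)) * Polynomial.X) (Polynomial.C Polynomial.X) :
        Fin (n + 1) → ℂ[X][X]) F).map (evalRingHom t)).eval u =
      aeval (Fin.snoc (w₀ + u • v) t) F := by
  rw [map_evalRingHom_eval, ← coe_aevalAeval_eq_evalEval,
    ← AlgHom.restrictScalars_apply R, comp_aeval_apply]
  congr 2
  funext i
  refine Fin.lastCases ?_ (fun j ↦ ?_) i
  · simp
  · simp [Fin.snoc_castSucc]; ring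

/-- Hurwitz's theorem for a polynomial family `F(w, t)` as `t → a`: restricted to the complex
line through `w₀` and `w`, it becomes a family of univariate polynomials of bounded degree. -/
theorem aeval_snoc_eq_zero_of_eventually_ne_zero {n : ℕ} {F : MvPolynomial (Fin (n + 1)) R}
    {U : Set (Fin n → ℂ)} (hU : IsOpen U) {l : Filter ℂ} [l.NeBot] {a : ℂ} (hl : l ≤ 𝓝 a)
    (hF : ∀ᶠ t in l, ∀ w ∈ U, aeval (Fin.snoc w t) F ≠ 0)
    {w₀ : Fin n → ℂ} (hw₀ : w₀ ∈ U) (h₀ : aeval (Fin.snoc w₀ a) F = 0)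
    (w : Fin n → ℂ) : aeval (Fin.snoc w a) F = 0 := by
  by_contra hw
  set G : ℂ[X][X] := aeval (Fin.snoc (fun j ↦ Polynomial.C (Polynomial.C (w₀ j)) +
    Polynomial.C (Polynomial.C ((w - w₀) j)) * Polynomial.X) (Polynomial.C Polynomial.X)) F
  have hG := eval_map_aeval_snoc_line F w₀ (w - w₀)
  obtain ⟨r, hr, hball⟩ : ∃ r > 0, ∀ u : ℂ, ‖u‖ < r → w₀ + u • (w - w₀) ∈ U := by
    have hopen : IsOpen ((fun u : ℂ ↦ w₀ + u • (w - w₀)) ⁻¹' U) := hU.preimage (by fun_prop)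
    obtain ⟨r, hr, hsub⟩ := Metric.isOpen_iff.mp hopen 0 (by simpa using hw₀)
    exact ⟨r, hr, fun u hu ↦ hsub (by simpa using hu)⟩
  refine eval_zero_ne_zero_of_tendsto_coeff (g := fun t ↦ G.map (evalRingHom t))
    (g₀ := G.map (evalRingHom a)) (l := l) (D := G.natDegree) ?_ (fun t ↦ natDegree_map_le)
    (fun k ↦ ?_) hr ?_ ?_
  · intro h
    have := hG a 1
    rw [h, Polynomial.eval_zero, one_smul, add_sub_cancel] at this
    exact hw this.symm
  · simp only [Polynomial.coeff_map, coe_evalRingHom]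
    exact ((G.coeff k).continuous.tendsto a).mono_left hl
  · filter_upwards [hF] with t ht u hu
    rw [hG]
    exact ht _ (hball u hu)
  · rw [hG, zero_smul, add_zero]
    exact h₀

end ComplexAlgebra

theorem iterate_pderiv_rename_castSucc_mul_X_pow {R : Type*} [CommSemiring R] {n : ℕ}
    (q : MvPolynomial (Fin n) R) (i k : ℕ) :
    (pderiv (Fin.last n))^[k] (rename Fin.castSucc q * X (Fin.last n) ^ i) =
      rename Fin.castSucc q * (C (i.descFactorial k : R) * X (Fin.last n) ^ (i - k)) := by
  have hq : pderiv (Fin.last n) (rename Fin.castSucc q) = 0 := by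
    refine pderiv_eq_zero_of_notMem_vars fun h ↦ ?_
    obtain ⟨j, -, hj⟩ := Finset.mem_image.mp (vars_rename _ _ h)
    exact Fin.castSucc_ne_last j hj
  induction k with
  | zero => simp
  | succ k ih =>
    rw [Function.iterate_succ_apply', ih, Derivation.leibniz, hq, pderiv_C_mul, pderiv_pow,
      pderiv_X_self, Nat.descFactorial_succ, Nat.sub_sub]
    simp only [smul_eq_mul, mul_zero, add_zero, mul_one, Nat.cast_mul, map_mul, map_natCast]
    ring

theorem aeval_snoc_zero_iterate_pderiv_last {R : Type*} [CommSemiring R] {n d k : ℕ}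
    (s : ℕ → MvPolynomial (Fin n) R) (hk : k ≤ d) :
    aeval (Fin.snoc X 0) ((pderiv (Fin.last n))^[k]
      (∑ i ∈ Finset.range (d + 1), rename Fin.castSucc (s i) * X (Fin.last n) ^ i)) =
      MvPolynomial.C (k.factorial : R) * s k := by
  have hterm (i : ℕ) : aeval (Fin.snoc X 0) ((pderiv (Fin.last n))^[k]
      (rename Fin.castSucc (s i) * X (Fin.last n) ^ i)) =
      s i * (MvPolynomial.C (i.descFactorial k : R) * 0 ^ (i - k)) := by
    rw [iterate_pderiv_rename_castSucc_mul_X_pow, map_mul, aeval_rename, Fin.snoc_comp_castSucc,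
      MvPolynomial.aeval_X_left_apply, map_mul, MvPolynomial.aeval_C, map_pow, aeval_X,
      Fin.snoc_last]
    rfl
  rw [← Derivation.coeFn_coe, ← Module.End.coe_pow, map_sum, map_sum,
    Finset.sum_eq_single_of_mem k (Finset.mem_range.mpr (Nat.lt_succ_of_le hk))]
  · rw [Module.End.coe_pow, Derivation.coeFn_coe, hterm, Nat.descFactorial_self, Nat.sub_self,
      pow_zero, mul_one, mul_comm]
  · intro i _ hik
    rw [Module.End.coe_pow, Derivation.coeFn_coe, hterm]
    rcases lt_or_gt_of_ne hik with hlt | hgt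
    · rw [Nat.descFactorial_eq_zero_iff_lt.mpr hlt, Nat.cast_zero, map_zero, zero_mul, mul_zero]
    · rw [zero_pow (Nat.sub_ne_zero_of_lt hgt), mul_zero, mul_zero]

theorem eq_zero_of_forall_aeval_eq_zero {σ : Type*} {p : MvPolynomial σ ℝ}
    (h : ∀ w : σ → ℂ, aeval w p = 0) : p = 0 :=
  funext fun x ↦ by
    have hx := h (algebraMap ℝ ℂ ∘ x)
    rw [aeval_algebraMap_apply] at hx
    simpa using hx

end MvPolynomial

theorem isOpen_upperHalfSpace (ι : Type*) [Finite ι] : IsOpen {w : ι → ℂ | ∀ i, 0 < (w i).im} := by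
  simp only [Set.ofPred_forall]
  exact isOpen_iInter_of_finite fun i ↦
    isOpen_lt continuous_const (Complex.continuous_im.comp (continuous_apply i))

theorem isStable_of_forall_eq_zero {n : ℕ} {p : MvPolynomial (Fin n) ℝ}
    (h : ∀ w₀ : Fin n → ℂ, (∀ i, 0 < (w₀ i).im) → MvPolynomial.aeval w₀ p = 0 →
      ∀ w : Fin n → ℂ, MvPolynomial.aeval w p = 0) : IsStable p := by
  by_cases hp : p = 0
  · exact Or.inl hp
  · exact Or.inr fun w₀ hw₀ h₀ ↦ hp (MvPolynomial.eq_zero_of_forall_aeval_eq_zero (h w₀ hw₀ h₀))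

theorem IsStable.of_C_mul {n : ℕ} {p : MvPolynomial (Fin n) ℝ} {c : ℝ} (hc : c ≠ 0)
    (hp : IsStable (MvPolynomial.C c * p)) : IsStable p := by
  rcases hp with hp | hp
  · exact Or.inl ((mul_eq_zero.mp hp).resolve_left (by simpa using hc))
  · exact Or.inr fun w hw h ↦ hp w hw (by simp [h])

open MvPolynomial in
/-- The limit `t → 0` of the stable polynomials `t p + ∂ᵢp`. -/
theorem IsStable.pderiv {n : ℕ} {p : MvPolynomial (Fin n) ℝ} (hp : IsStable p) (i : Fin n) :
    IsStable (MvPolynomial.pderiv i p) := by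
  rcases hp with rfl | hp
  · exact Or.inl (map_zero _)
  set F : MvPolynomial (Fin (n + 1)) ℝ :=
    X (Fin.last n) * rename Fin.castSucc p + rename Fin.castSucc (MvPolynomial.pderiv i p)
  have hF (w : Fin n → ℂ) (t : ℂ) :
      aeval (Fin.snoc w t) F = t * aeval w p + aeval w (MvPolynomial.pderiv i p) := by
    simp [F, aeval_rename, Fin.snoc_comp_castSucc]
  have hne : ∀ᶠ t in map Complex.ofReal (𝓝[≠] 0), ∀ w ∈ {w : Fin n → ℂ | ∀ j, 0 < (w j).im},
      aeval (Fin.snoc w t) F ≠ 0 := by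
    refine eventually_map.mpr (eventually_mem_nhdsWithin.mono fun t ht w hw ↦ ?_)
    have hslice : ∀ ζ : ℂ, 0 < ζ.im →
        (aeval (Function.update (fun j ↦ Polynomial.C (w j)) i Polynomial.X) p).eval ζ ≠ 0 := by
      intro ζ hζ
      rw [eval_aeval_update]
      refine hp _ fun j ↦ ?_
      rcases eq_or_ne j i with rfl | hj
      · simpa using hζ
      · simpa [Function.update_of_ne hj] using hw j
    have := Polynomial.eval_C_mul_add_derivative_ne_zero hslice ht (hw i)
    rwa [derivative_aeval_update, Polynomial.eval_add, Polynomial.eval_mul, Polynomial.eval_C,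
      eval_aeval_update, eval_aeval_update, Function.update_eq_self, ← hF] at this
  refine isStable_of_forall_eq_zero fun w₀ hw₀ h₀ w ↦ ?_
  have hl : map Complex.ofReal (𝓝[≠] 0) ≤ 𝓝 0 :=
    (Complex.continuous_ofReal.tendsto' 0 0 Complex.ofReal_zero).mono_left nhdsWithin_le_nhds
  have := aeval_snoc_eq_zero_of_eventually_ne_zero (isOpen_upperHalfSpace (Fin n)) hl hne hw₀
    (by rw [hF, zero_mul, zero_add]; exact h₀) w
  rwa [hF, zero_mul, zero_add] at this

open MvPolynomial in
/-- The limit `t → 0⁺` of the stable polynomials `p(w, a + t i)`. -/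
theorem IsStable.aeval_snoc_X_C {n : ℕ} {p : MvPolynomial (Fin (n + 1)) ℝ} (hp : IsStable p)
    (a : ℝ) : IsStable (aeval (Fin.snoc X (C a)) p) := by
  rcases hp with rfl | hp
  · exact Or.inl (map_zero _)
  have heval (w : Fin n → ℂ) : aeval w (aeval (Fin.snoc X (C a)) p) = aeval (Fin.snoc w a) p := by
    rw [comp_aeval_apply]
    congr 2
    funext i
    refine Fin.lastCases ?_ (fun j ↦ ?_) i <;> simp
  have hne : ∀ᶠ t in map (fun t : ℝ ↦ a + t * Complex.I) (𝓝[>] 0),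
      ∀ w ∈ {w : Fin n → ℂ | ∀ j, 0 < (w j).im}, aeval (Fin.snoc w t) p ≠ 0 := by
    refine eventually_map.mpr (eventually_mem_nhdsWithin.mono fun t ht w hw ↦ hp _ fun i ↦ ?_)
    refine Fin.lastCases ?_ (fun j ↦ ?_) i
    · simpa using ht
    · simpa using hw j
  have hl : map (fun t : ℝ ↦ a + t * Complex.I) (𝓝[>] 0) ≤ 𝓝 (a : ℂ) :=
    ((by fun_prop : Continuous fun t : ℝ ↦ a + t * Complex.I).tendsto' 0 a (by simp)).mono_left
      nhdsWithin_le_nhds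
  refine isStable_of_forall_eq_zero fun w₀ hw₀ h₀ w ↦ ?_
  rw [heval] at h₀ ⊢
  exact aeval_snoc_eq_zero_of_eventually_ne_zero (isOpen_upperHalfSpace (Fin n)) hl hne hw₀ h₀ w

/-- if `p(x,y,z) = ∑_{i=0}^d s_i(x,y) zⁱ` is stable
(`x = X 0`, `y = X 1`, `z = X 2`), then every coefficient polynomial `s_k` is stable. -/
theorem coefficients_of_stable_are_stable (d : ℕ) (s : ℕ → MvPolynomial (Fin 2) ℝ)
    (p : MvPolynomial (Fin 3) ℝ)
    (hp : p = ∑ i ∈ Finset.range (d + 1),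
      MvPolynomial.rename Fin.castSucc (s i) * MvPolynomial.X 2 ^ i)
    (hstab : IsStable p) :
    ∀ k ≤ d, IsStable (s k) := by
  intro k hk
  have hderiv : IsStable ((MvPolynomial.pderiv (Fin.last 2))^[k] p) :=
    Function.Iterate.rec IsStable hstab (fun q hq ↦ hq.pderiv _) k
  have hspec := hderiv.aeval_snoc_X_C 0
  rw [map_zero, hp, show (2 : Fin 3) = Fin.last 2 from rfl,
    MvPolynomial.aeval_snoc_zero_iterate_pderiv_last s hk] at hspec
  exact hspec.of_C_mul (by positivity)

end
end

section
/- Let h(x,y) be a bivariate real polynomial that is homogeneous of degree d, has nonnegative coefficients, is stable, and is symmetric in x and y. Then h(x,y) is homogeneous γ-positive: h(x,y) = Σ_{k=0}^{⌊d/2⌋} γ_k (xy)^k (x+y)^{d−2k} with all γ_k ≥ 0. -/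
/-!
Dehomogenize: `h = p.homogenize d` with `p = h(X, 1)`. If `p(z) = 0` with `z` not real, then
`h(z w, w) = w ^ d p(z) = 0` for a `w` with `w` and `z w` both in the upper half plane, so
stability makes `p` split over `ℝ`; nonnegative coefficients put its roots in `(-∞, 0]`;
symmetry makes it palindromic of degree `d`, so its roots come in pairs `a, a⁻¹`, with `-1`
alone and `0` paired with the missing top degrees. Hence `p` is a positive constant times the
palindromic factors `X`, `X + 1` and `(X - a)(X - a⁻¹) = (1 + X)^2 + (-(a + a⁻¹) - 2) X`, each
γ-positive since `a < 0`, and γ-positivity in degrees `m` and `n` multiplies to degree `m + n`.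
Homogenizing `p = ∑ γ_k X^k (1 + X)^(d - 2k)` gives the claim.
-/

open scoped Classical

noncomputable section

open Finset

namespace MvPolynomial

lemma eval_pos_of_coeff_nonneg {σ R : Type*} [Fintype σ] [CommSemiring R]
    [PartialOrder R] [IsStrictOrderedRing R] {q : MvPolynomial σ R} (hq : q ≠ 0)
    (hnn : ∀ m, 0 ≤ q.coeff m) {x : σ → R} (hx : ∀ i, 0 < x i) : 0 < eval x q := by
  obtain ⟨m, hm⟩ := ne_zero_iff.1 hq
  rw [eval_eq]
  exact sum_pos' (fun m _ => mul_nonneg (hnn m) (prod_nonneg fun i _ => (pow_pos (hx i) _).le))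
    ⟨m, mem_support_iff.2 hm,
      mul_pos ((hnn m).lt_of_ne' hm) (prod_pos fun i _ => pow_pos (hx i) _)⟩

lemma isHomogeneous_sum_C_mul_X_mul_X_pow_mul_X_add_X_pow {R : Type*} [CommSemiring R]
    (γ : ℕ → R) (n : ℕ) :
    (∑ k ∈ range (n / 2 + 1), C (γ k) * (X 0 * X 1) ^ k * (X 0 + X 1) ^ (n - 2 * k) :
      MvPolynomial (Fin 2) R).IsHomogeneous n := by
  refine IsHomogeneous.sum _ _ _ fun k hk => ?_
  have hk : 2 * k ≤ n := by rw [mem_range] at hk; omega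
  have hX (i : Fin 2) := isHomogeneous_X R i
  have := ((isHomogeneous_C _ (γ k)).mul (((hX 0).mul (hX 1)).pow k)).mul
    (((hX 0).add (hX 1)).pow (n - 2 * k))
  rwa [show 0 + (1 + 1) * k + 1 * (n - 2 * k) = n by omega] at this

end MvPolynomial

namespace Polynomial

section Palindromic

variable {R : Type*} [Semiring R] {m n : ℕ} {p q : R[X]}

def IsPalindromic (n : ℕ) (p : R[X]) : Prop :=
  p.natDegree ≤ n ∧ p.reflect n = p

namespace IsPalindromic

lemma add (hp : IsPalindromic n p) (hq : IsPalindromic n q) : IsPalindromic n (p + q) :=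
  ⟨natDegree_add_le_of_degree_le hp.1 hq.1, by rw [reflect_add, hp.2, hq.2]⟩

lemma mul (hp : IsPalindromic m p) (hq : IsPalindromic n q) : IsPalindromic (m + n) (p * q) :=
  ⟨natDegree_mul_le.trans (add_le_add hp.1 hq.1), by rw [reflect_mul _ _ hp.1 hq.1, hp.2, hq.2]⟩

lemma pow (hp : IsPalindromic n p) (k : ℕ) : IsPalindromic (n * k) (p ^ k) := by
  induction k with
  | zero => exact ⟨by simp, by simp⟩
  | succ k ih => simpa [pow_succ, Nat.mul_succ] using ih.mul hp

lemma coeff_eq_coeff_zero (hp : IsPalindromic n p) : p.coeff n = p.coeff 0 := by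
  conv_lhs => rw [← hp.2]
  rw [coeff_reflect, revAt_le le_rfl, Nat.sub_self]

end IsPalindromic

lemma isPalindromic_C_mul_X_pow (c : R) (k : ℕ) : IsPalindromic (2 * k) (C c * X ^ k) :=
  ⟨natDegree_C_mul_X_pow_le c k |>.trans (by omega), by
    rw [reflect_C_mul_X_pow, revAt_le (by omega), show 2 * k - k = k by omega]⟩

lemma isPalindromic_one_add_X : IsPalindromic 1 (1 + X : R[X]) :=
  ⟨natDegree_add_le_of_degree_le (by simp) natDegree_X_le, by
    rw [reflect_add, reflect_one, ← pow_one X, reflect_monomial]; simp [add_comm]⟩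

end Palindromic

section Domain

variable {R : Type*} [CommRing R] [IsDomain R] {k m : ℕ} {s q : R[X]}

lemma IsPalindromic.of_mul (hsq : IsPalindromic (k + m) (s * q)) (hs : IsPalindromic k s)
    (hs0 : s ≠ 0) (hq : q.natDegree ≤ m) : IsPalindromic m q := by
  refine ⟨hq, mul_left_cancel₀ hs0 ?_⟩
  rw [← hsq.2, reflect_mul _ _ hs.1 hq, hs.2]

end Domain

lemma IsPalindromic.isRoot_inv {K : Type*} [Field K] {n : ℕ} {p : K[X]} (hp : IsPalindromic n p)
    {a : K} (ha : a ≠ 0) (hroot : p.IsRoot a) : p.IsRoot a⁻¹ := by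
  let := invertibleOfNonzero ha
  have := (eval₂_reflect_eq_zero_iff (RingHom.id K) a n p hp.1).2 (by simpa using hroot)
  rwa [hp.2, invOf_eq_inv, eval₂_id] at this

section GammaPositive

variable {R : Type*} [CommSemiring R] [PartialOrder R] {m n : ℕ} {p q : R[X]}

/-- `p` is `h(X, 1)` for a homogeneous γ-positive `h` of degree `n`. -/
def IsGammaPositive (n : ℕ) (p : R[X]) : Prop :=
  ∃ γ : ℕ → R, (∀ k, 0 ≤ γ k) ∧
    p = ∑ k ∈ range (n / 2 + 1), C (γ k) * X ^ k * (1 + X) ^ (n - 2 * k)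

lemma isGammaPositive_C_mul_X_pow_mul_one_add_X_pow {c : R} (hc : 0 ≤ c) {k : ℕ}
    (hk : 2 * k ≤ n) : IsGammaPositive n (C c * X ^ k * (1 + X) ^ (n - 2 * k)) := by
  refine ⟨fun i => if i = k then c else 0, fun i => by dsimp only; split_ifs <;> simp [hc], ?_⟩
  simp only [apply_ite C, map_zero, ite_mul, zero_mul, sum_ite_eq', mem_range]
  rw [if_pos (by omega)]

namespace IsGammaPositive

lemma add [IsOrderedRing R] (hp : IsGammaPositive n p) (hq : IsGammaPositive n q) :
    IsGammaPositive n (p + q) := by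
  obtain ⟨γ, hγ, rfl⟩ := hp
  obtain ⟨δ, hδ, rfl⟩ := hq
  refine ⟨γ + δ, fun k => add_nonneg (hγ k) (hδ k), ?_⟩
  simp only [Pi.add_apply, C_add, add_mul, sum_add_distrib]

lemma mul [IsOrderedRing R] (hp : IsGammaPositive m p) (hq : IsGammaPositive n q) :
    IsGammaPositive (m + n) (p * q) := by
  obtain ⟨γ, hγ, rfl⟩ := hp
  obtain ⟨δ, hδ, rfl⟩ := hq
  set s := range (m / 2 + 1) ×ˢ range (n / 2 + 1)
  refine ⟨fun k => ∑ ij ∈ s with ij.1 + ij.2 = k, γ ij.1 * δ ij.2,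
    fun k => sum_nonneg fun ij _ => mul_nonneg (hγ _) (hδ _), ?_⟩
  have hmaps : ∀ ij ∈ s, ij.1 + ij.2 ∈ range ((m + n) / 2 + 1) := by
    simp only [s, mem_product, mem_range]; omega
  rw [sum_mul_sum, ← sum_product', ← sum_fiberwise_of_maps_to hmaps]
  refine sum_congr rfl fun k _ => ?_
  rw [map_sum, sum_mul, sum_mul]
  refine sum_congr rfl fun ij hij => ?_
  simp only [s, mem_filter, mem_product, mem_range] at hij
  obtain ⟨⟨hi, hj⟩, rfl⟩ := hij
  rw [show m + n - 2 * (ij.1 + ij.2) = (m - 2 * ij.1) + (n - 2 * ij.2) by omega, pow_add,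
    pow_add, C_mul]
  ring

lemma isPalindromic (hp : IsGammaPositive n p) : IsPalindromic n p := by
  obtain ⟨γ, -, rfl⟩ := hp
  refine sum_induction _ (IsPalindromic n) (fun _ _ => IsPalindromic.add)
    ⟨by simp, by simp⟩ fun k hk => ?_
  have hk : 2 * k ≤ n := by rw [mem_range] at hk; omega
  have := (isPalindromic_C_mul_X_pow (γ k) k).mul (isPalindromic_one_add_X.pow (n - 2 * k))
  rwa [show 2 * k + 1 * (n - 2 * k) = n by omega] at this

lemma eval_nonneg [IsOrderedRing R] (hp : IsGammaPositive n p) {t : R} (ht : 0 ≤ t) :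
    0 ≤ p.eval t := by
  obtain ⟨γ, hγ, rfl⟩ := hp
  rw [eval_finsetSum]
  refine sum_nonneg fun k _ => ?_
  simp only [eval_mul, eval_C, eval_pow, eval_X, eval_add, eval_one]
  exact mul_nonneg (mul_nonneg (hγ k) (pow_nonneg ht _))
    (pow_nonneg (add_nonneg zero_le_one ht) _)

end IsGammaPositive

end GammaPositive

section OrderedField

variable {K : Type*} [Field K] [LinearOrder K] [IsStrictOrderedRing K]

lemma isGammaPositive_X_sub_C_mul_X_sub_C_inv {a : K} (ha : a < 0) :
    IsGammaPositive 2 ((X - C a) * (X - C a⁻¹)) := by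
  have hb : 0 ≤ -(a + a⁻¹) - 2 := by
    have : -(a + a⁻¹) - 2 = (a + 1) ^ 2 * -a⁻¹ := by have := ha.ne; field_simp; ring
    rw [this]
    exact mul_nonneg (sq_nonneg _) (neg_nonneg.2 (inv_nonpos.2 ha.le))
  have hC : C a * C a⁻¹ = (1 : K[X]) := by rw [← C_mul, mul_inv_cancel₀ ha.ne, C_1]
  have := (isGammaPositive_C_mul_X_pow_mul_one_add_X_pow zero_le_one (k := 0) (n := 2)
    (by norm_num)).add (isGammaPositive_C_mul_X_pow_mul_one_add_X_pow hb (k := 1) le_rfl)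
  convert this using 1
  simp only [map_sub, map_neg, map_add, map_one, C_ofNat]
  linear_combination hC

lemma IsPalindromic.exists_isGammaPositive_factor {n : ℕ} {p : K[X]} (hpal : IsPalindromic n p)
    (hp0 : p ≠ 0) {a : K} (ha0 : a ≤ 0) (ha : p.IsRoot a) :
    ∃ k s q, p = s * q ∧ 0 < s.natDegree ∧ IsGammaPositive k s ∧
      p.natDegree + k ≤ n + s.natDegree := by
  have hpn : p.natDegree ≤ n := hpal.1
  rcases ha0.eq_or_lt with rfl | ha0
  · obtain ⟨q, hq⟩ := (X_dvd_iff (f := p)).2 (by rwa [coeff_zero_eq_eval_zero])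
    -- `p.coeff n = p.coeff 0 = 0`, so `p.natDegree < n` and `X` may count for degree 2
    have hdn : p.natDegree ≠ n := fun h => hp0 <| leadingCoeff_eq_zero.1 <| by
      rw [leadingCoeff, h, hpal.coeff_eq_coeff_zero, coeff_zero_eq_eval_zero, ha]
    refine ⟨2, X, q, hq, by simp, ?_, by rw [natDegree_X]; omega⟩
    simpa using isGammaPositive_C_mul_X_pow_mul_one_add_X_pow (R := K) (c := 1) zero_le_one
      (n := 2) (k := 1) le_rfl
  by_cases ha1 : a = -1
  · subst ha1
    obtain ⟨q, hq⟩ := dvd_iff_isRoot.2 ha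
    refine ⟨1, _, q, hq, by rw [natDegree_X_sub_C]; exact one_pos, ?_,
      by rw [natDegree_X_sub_C]; omega⟩
    simpa [add_comm] using isGammaPositive_C_mul_X_pow_mul_one_add_X_pow (R := K) (c := 1)
      zero_le_one (n := 1) (k := 0) (by norm_num)
  have hne : a - a⁻¹ ≠ 0 := by
    intro h
    have : a * a = 1 := by rw [sub_eq_zero] at h; nth_rw 2 [h]; exact mul_inv_cancel₀ ha0.ne
    rcases mul_self_eq_one_iff.1 this with h1 | h1 <;> [linarith; exact ha1 h1]
  obtain ⟨q, hq⟩ := (isCoprime_X_sub_C_of_isUnit_sub hne.isUnit).mul_dvd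
    (dvd_iff_isRoot.2 ha) (dvd_iff_isRoot.2 (hpal.isRoot_inv ha0.ne ha))
  have hs : ((X - C a) * (X - C a⁻¹)).natDegree = 2 := by
    rw [natDegree_mul (X_sub_C_ne_zero a) (X_sub_C_ne_zero _), natDegree_X_sub_C,
      natDegree_X_sub_C]
  exact ⟨2, _, q, hq, by omega, isGammaPositive_X_sub_C_mul_X_sub_C_inv ha0, by omega⟩

theorem IsPalindromic.isGammaPositive_of_splits {n : ℕ} {p : K[X]} (hpal : IsPalindromic n p)
    (hsplit : p.Splits) (hpos : ∀ t, 0 < t → 0 < p.eval t) : IsGammaPositive n p := by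
  induction hd : p.natDegree using Nat.strong_induction_on generalizing n p with
  | _ d IH =>
  have hp0 : p ≠ 0 := fun h => by simpa [h] using hpos 1 one_pos
  rcases Nat.eq_zero_or_pos d with rfl | hd0
  · have hC := eq_C_of_natDegree_eq_zero hd
    have hc : 0 < p.coeff 0 := by have := hpos 1 one_pos; rwa [hC, eval_C] at this
    obtain rfl : n = 0 :=
      Nat.le_zero.1 (hd ▸ le_natDegree_of_ne_zero (hpal.coeff_eq_coeff_zero ▸ hc.ne'))
    rw [hC]
    simpa using isGammaPositive_C_mul_X_pow_mul_one_add_X_pow hc.le (n := 0) (k := 0) le_rfl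
  obtain ⟨a, ha⟩ := hsplit.exists_eval_eq_zero
    (by rw [degree_eq_natDegree hp0, hd]; exact_mod_cast hd0.ne')
  obtain ⟨k, s, q, hsq, hs, hγs, hdeg⟩ :=
    hpal.exists_isGammaPositive_factor hp0 (not_lt.1 fun h => (hpos a h).ne' ha) ha
  have hs0 : s ≠ 0 := ne_zero_of_natDegree_gt hs
  have hq0 : q ≠ 0 := right_ne_zero_of_mul (hsq ▸ hp0)
  have hpsq : p.natDegree = s.natDegree + q.natDegree := hsq ▸ natDegree_mul hs0 hq0
  have hkn : k + (n - k) = n := by omega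
  have hqpal : IsPalindromic (n - k) q :=
    IsPalindromic.of_mul (hkn.symm ▸ hsq ▸ hpal) hγs.isPalindromic hs0
      (by have := hpal.1; omega)
  have hqpos : ∀ t, 0 < t → 0 < q.eval t := fun t ht =>
    pos_of_mul_pos_right (by rw [← eval_mul, ← hsq]; exact hpos t ht) (hγs.eval_nonneg ht.le)
  have hγq := IH _ (by omega) hqpal (hsplit.of_dvd hp0 (hsq ▸ dvd_mul_left q s)) hqpos rfl
  rw [hsq, ← hkn]
  exact hγs.mul hγq

end OrderedField

section Homogenize

variable {R : Type*} [CommSemiring R] {n : ℕ} {p : R[X]}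

lemma natDegree_aeval_X_one_le {q : MvPolynomial (Fin 2) R} (hq : q.IsHomogeneous n) :
    (MvPolynomial.aeval ![(X : R[X]), 1] q).natDegree ≤ n := by
  rw [q.as_sum, map_sum]
  refine natDegree_sum_le_of_forall_le _ _ fun m hm => ?_
  have hm := hq (MvPolynomial.mem_support_iff.1 hm)
  simp only [Finsupp.weight_apply, Pi.one_apply, smul_eq_mul, mul_one, Finsupp.sum_fintype,
    Fin.sum_univ_two, implies_true] at hm
  rw [MvPolynomial.aeval_monomial, Finsupp.prod_fintype _ _ (by simp), Fin.prod_univ_two]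
  simp only [Matrix.cons_val_zero, Matrix.cons_val_one, one_pow, mul_one, ← C_eq_algebraMap]
  exact (natDegree_C_mul_X_pow_le _ _).trans (by omega)

lemma aeval_one_X_homogenize (hn : p.natDegree ≤ n) :
    MvPolynomial.aeval ![1, X] (p.homogenize n) = p.reflect n := by
  refine induction_with_natDegree_le
    (fun p => MvPolynomial.aeval ![1, X] (p.homogenize n) = p.reflect n) n (by simp) ?_ ?_ p hn
  · intro k r _ hk
    simp [homogenize_X_pow hk, revAt_le hk]
  · intro f g _ _ hf hg
    rw [homogenize_add, map_add, hf, hg, reflect_add]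

lemma isPalindromic_of_rename_swap_homogenize (hn : p.natDegree ≤ n)
    (hsym : MvPolynomial.rename (Equiv.swap 0 1) (p.homogenize n) = p.homogenize n) :
    IsPalindromic n p := by
  refine ⟨hn, ?_⟩
  rw [← aeval_one_X_homogenize hn, ← hsym, MvPolynomial.aeval_rename]
  have hswap : (![1, X] ∘ Equiv.swap (0 : Fin 2) 1 : Fin 2 → R[X]) = ![X, 1] := by
    funext i
    fin_cases i <;> rfl
  rw [hswap, aeval_homogenize_X_one p hn]

lemma IsGammaPositive.exists_eval_homogenize [PartialOrder R] (hp : IsGammaPositive n p) :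
    ∃ γ : ℕ → R, (∀ k, 0 ≤ γ k) ∧ ∀ x y : R,
      MvPolynomial.eval ![x, y] (p.homogenize n) =
        ∑ k ∈ range (n / 2 + 1), γ k * (x * y) ^ k * (x + y) ^ (n - 2 * k) := by
  obtain ⟨γ, hγ, rfl⟩ := hp
  refine ⟨γ, hγ, fun x y => ?_⟩
  rw [homogenize_eq_of_isHomogeneous
    (MvPolynomial.isHomogeneous_sum_C_mul_X_mul_X_pow_mul_X_add_X_pow γ n) (by simp [add_comm])]
  simp

end Homogenize

lemma splits_of_aeval_homogenize_ne_zero {p : ℝ[X]} {n : ℕ} (hn : p.natDegree ≤ n)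
    (hstab : ∀ z : Fin 2 → ℂ, (∀ i, 0 < (z i).im) →
      MvPolynomial.aeval z (p.homogenize n) ≠ 0) :
    p.Splits := by
  refine Splits.of_splits_map (algebraMap ℝ ℂ) (IsAlgClosed.splits _) fun z hz => ?_
  have hroot : aeval z p = 0 := by
    rw [← eval_map_algebraMap]; exact (mem_roots'.1 hz).2
  suffices hz0 : z.im = 0 from ⟨z.re, Complex.ext (by simp) (by simp [hz0])⟩
  by_contra hz0
  -- `Im w = 1`, and the real part of `w` is chosen to make `Im (z * w) = 1` as well.
  set w : ℂ := ((1 - z.re) / z.im : ℝ) + Complex.I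
  have hw : w ≠ 0 := fun h => by simpa [w] using congrArg Complex.im h
  refine hstab ![z * w, w] (Fin.forall_fin_two.2 ⟨?_, by simp [w]⟩) ?_
  · show 0 < (z * w).im
    rw [show (z * w).im = z.re + z.im * ((1 - z.re) / z.im) by simp [w, Complex.mul_im],
      mul_div_cancel₀ _ hz0]
    norm_num
  · rw [MvPolynomial.aeval_def, ← MvPolynomial.eval_map, ← homogenize_map,
      eval_homogenize (natDegree_map_le.trans hn) _ (by simpa using hw)]
    simp [hw, eval_map_algebraMap, hroot]

end Polynomial

/-- a bivariate real polynomial (`x = X 0`, `y = X 1`) which is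
homogeneous of degree `d`, has nonnegative coefficients, is stable and is symmetric
in `x` and `y` is homogeneous γ-positive. -/
theorem stable_symmetric_implies_gamma_positive
    (h : MvPolynomial (Fin 2) ℝ) (d : ℕ) (hhom : h.IsHomogeneous d)
    (hnn : ∀ c, 0 ≤ h.coeff c) (hstab : IsStable h)
    (hsym : MvPolynomial.rename (Equiv.swap (0 : Fin 2) 1) h = h) :
    ∃ γ : ℕ → ℝ, (∀ k, 0 ≤ γ k) ∧ ∀ x y : ℝ,
      MvPolynomial.eval ![x, y] h =
        ∑ k ∈ Finset.range (d / 2 + 1), γ k * (x * y) ^ k * (x + y) ^ (d - 2 * k) := by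
  rcases eq_or_ne h 0 with rfl | h0
  · exact ⟨0, fun _ => le_rfl, fun x y => by simp⟩
  obtain ⟨p, hpd, rfl⟩ : ∃ p : Polynomial ℝ, p.natDegree ≤ d ∧ p.homogenize d = h :=
    ⟨_, Polynomial.natDegree_aeval_X_one_le hhom,
      Polynomial.homogenize_eq_of_isHomogeneous hhom rfl⟩
  have hpos : ∀ t : ℝ, 0 < t → 0 < p.eval t := fun t ht => by
    simpa [Polynomial.eval_homogenize hpd] using MvPolynomial.eval_pos_of_coeff_nonneg h0 hnn
      (x := ![t, 1]) (Fin.forall_fin_two.2 ⟨ht, one_pos⟩)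
  have hpal := Polynomial.isPalindromic_of_rename_swap_homogenize hpd hsym
  have hsplit := Polynomial.splits_of_aeval_homogenize_ne_zero hpd (hstab.resolve_left h0)
  exact (hpal.isGammaPositive_of_splits hsplit hpos).exists_eval_homogenize

end
end

section
/- For any vector m = (m_1,…,m_n) of positive integers, any π ∈ Q_m and any x ∈ [n], the statistic mdup is invariant under the generalized Foata–Strehl action: mdup(φ_x(π)) = mdup(π). Moreover, x is a free descent-plateau value or a single double-descent value of π if and only if x is a double-ascent value of φ_x(π). -/
open scoped Classical

noncomputable section

/-- The (1-based) position of the leftmost occurrence of the letter `x` in `π`. -/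
def lpos (π : List ℕ) (x : ℕ) : ℕ := π.idxOf x + 1

/-- `x` is a free descent-plateau value of `π`: the leftmost occurrence `ℓ` of `x`
is a free descent-plateau (freeness being automatic for the leftmost occurrence). -/
def IsFDPVal (π : List ℕ) (x : ℕ) : Prop :=
  x ∈ π ∧ x < ent π (lpos π x - 1) ∧ ent π (lpos π x + 1) = x

/-- `x` is a single double-descent value of `π`. -/
def IsSDDVal (π : List ℕ) (x : ℕ) : Prop :=
  x ∈ π ∧ π.count x = 1 ∧ x < ent π (lpos π x - 1) ∧ ent π (lpos π x + 1) < x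

/-- `x` is a double-ascent value of `π`. -/
def IsDAVal (π : List ℕ) (x : ℕ) : Prop :=
  x ∈ π ∧ ent π (lpos π x - 1) < x ∧ x < ent π (lpos π x + 1)

/-- The generalized Foata--Strehl action `φ_x`.  If `x` is a free descent-plateau or a
single double-descent value, its leftmost occurrence `π_ℓ` is moved to the right of `π_k`
where `k = max {a : 0 ≤ a ≤ ℓ - 2, π_a < x}`; if `x` is a double-ascent value, `π_ℓ` is
moved to the left of `π_k` where `k = min {a : ℓ + 2 ≤ a ≤ m + 1, π_a ≤ x}`; otherwise
`π` is fixed.  (Positions are 1-based with `π_0 = π_{m+1} = 0`; lists are 0-indexed, so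
the leftmost occurrence of `x` is at list index `ℓ - 1 = π.indexOf x`.) -/
def gfs (π : List ℕ) (x : ℕ) : List ℕ :=
  if IsFDPVal π x ∨ IsSDDVal π x then
    (π.eraseIdx (π.idxOf x)).insertIdx
      (((Finset.range (π.idxOf x)).filter fun a => ent π a < x).sup id) x
  else if IsDAVal π x then
    (π.eraseIdx (π.idxOf x)).insertIdx
      ((insert (π.length + 1)
          ((Finset.Icc (π.idxOf x + 3) (π.length + 1)).filter fun a => ent π a ≤ x)).min'
        (Finset.insert_nonempty _ _) - 2) x
  else π

/-! In both nontrivial cases `φ_x` slides the leftmost `x` across a nonempty block `D` of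
letters larger than `x`: `C D x B ↦ C x D B` for a free descent-plateau or single
double-descent value, `C x D B ↦ C D x B` for a double-ascent value, where `C` ends below `x`
and `B` starts with a letter `≤ x`. Such a slide preserves `mdup` index by index. The
letter `x` contributes nothing in either place: before `D` it is an ascent, after `D` it is a
single descent or a free descent-plateau. Every other letter keeps its multiplicity and
whether it is a leftmost occurrence, and a neighbour that changes is replaced by one on the
same side of it, except that a letter `x` right after the block is preceded by a larger
letter in `C x D B`, where it is not a leftmost occurrence, and by `x` in `C D x B`; in both
words it counts exactly when it is a plateau or a descent.
For a double-ascent value the generalized Stirling condition forbids a later `x` once a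
smaller letter has followed, so the moved `x` is indeed single when it descends. -/

theorem insertIdx_length_append (C D : List ℕ) (x : ℕ) :
    (C ++ D).insertIdx C.length x = C ++ x :: D := by
  induction C with
  | nil => simp
  | cons a C ih => simpa [List.insertIdx_succ_cons] using ih

theorem idxOf_append_cons {A : List ℕ} (B : List ℕ) {x : ℕ} (hxA : x ∉ A) :
    (A ++ x :: B).idxOf x = A.length := by
  rw [List.idxOf_append_of_notMem hxA, List.idxOf_cons_self, Nat.add_zero]

theorem eraseIdx_append_cons (A B : List ℕ) (x : ℕ) :
    (A ++ x :: B).eraseIdx A.length = A ++ B := by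
  rw [List.eraseIdx_append_of_length_le le_rfl, Nat.sub_self, List.eraseIdx_cons_zero]

theorem exists_eq_append_cons_of_lt {l : List ℕ} {j : ℕ} (hj : j < l.length) :
    ∃ l₁ a l₂, l = l₁ ++ a :: l₂ ∧ l₁.length = j :=
  ⟨l.take j, l[j], l.drop (j + 1), by rw [List.getElem_cons_drop, List.take_append_drop],
    by simp; omega⟩

theorem sup_filter_range_spec {p : ℕ → Prop} [DecidablePred p] {n k : ℕ} (hn : 0 < n)
    (hp : p 0) (hk : ((Finset.range n).filter p).sup id = k) :
    k < n ∧ p k ∧ ∀ a, k < a → a < n → ¬ p a := by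
  obtain ⟨k', hk'S, hk'⟩ :=
    Finset.exists_mem_eq_sup ((Finset.range n).filter p) ⟨0, by simp [hn, hp]⟩ id
  rw [hk] at hk'
  subst hk'
  simp only [Finset.mem_filter, Finset.mem_range] at hk'S
  refine ⟨hk'S.1, hk'S.2, fun a hka han hpa => ?_⟩
  have := Finset.le_sup (f := id) (Finset.mem_filter.mpr ⟨Finset.mem_range.mpr han, hpa⟩)
  rw [hk] at this
  exact absurd this (by simpa using hka)

theorem min'_insert_filter_Icc_spec {p : ℕ → Prop} [DecidablePred p] {lo m k : ℕ}
    (hk : (insert m ((Finset.Icc lo m).filter p)).min' (Finset.insert_nonempty _ _) = k) :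
    k ≤ m ∧ (k = m ∨ lo ≤ k ∧ p k) ∧ ∀ a, lo ≤ a → a < k → ¬ p a := by
  have hmem := hk ▸ Finset.min'_mem _ (Finset.insert_nonempty m ((Finset.Icc lo m).filter p))
  have hle : ∀ a ∈ insert m ((Finset.Icc lo m).filter p), k ≤ a := fun a ha =>
    hk ▸ Finset.min'_le _ a ha
  have hkm : k ≤ m := hle m (Finset.mem_insert_self _ _)
  refine ⟨hkm, ?_, fun a hlo hak hpa => ?_⟩
  · rcases Finset.mem_insert.mp hmem with h | h
    · exact Or.inl h
    · simp only [Finset.mem_filter, Finset.mem_Icc] at h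
      exact Or.inr ⟨h.1.1, h.2⟩
  · have := hle a (Finset.mem_insert_of_mem
      (Finset.mem_filter.mpr ⟨Finset.mem_Icc.mpr ⟨hlo, (hak.trans_le hkm).le⟩, hpa⟩))
    omega

theorem ent_of_length_lt {π : List ℕ} {i : ℕ} (h : π.length < i) : ent π i = 0 := by
  unfold ent
  split_ifs
  · rfl
  · exact List.getD_eq_default _ _ (by omega)

theorem ent_append_of_le {U : List ℕ} (V : List ℕ) {i : ℕ} (h : i ≤ U.length) :
    ent (U ++ V) i = ent U i := by
  unfold ent
  split_ifs
  · rfl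
  · exact List.getD_append _ _ _ _ (by omega)

theorem ent_append_add (U : List ℕ) {V : List ℕ} {j : ℕ} (hj : 1 ≤ j) :
    ent (U ++ V) (U.length + j) = ent V j := by
  unfold ent
  rw [if_neg (by omega), if_neg (by omega), List.getD_append_right _ _ _ _ (by omega)]
  congr 1
  omega

theorem ent_cons_add_one (a : ℕ) {V : List ℕ} {j : ℕ} (hj : 1 ≤ j) :
    ent (a :: V) (j + 1) = ent V j := by
  simpa [Nat.add_comm] using ent_append_add [a] (V := V) hj

theorem ent_take {π : List ℕ} {n i : ℕ} (h : i ≤ n) : ent (π.take n) i = ent π i := by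
  unfold ent
  split_ifs
  · rfl
  · rw [List.getD_eq_getElem?_getD, List.getD_eq_getElem?_getD, List.getElem?_take,
      if_pos (by omega)]

theorem ent_drop {π : List ℕ} {n i : ℕ} (h : 1 ≤ i) :
    ent (π.drop n) i = ent π (n + i) := by
  unfold ent
  rw [if_neg (by omega), if_neg (by omega)]
  rcases Nat.lt_or_ge (n + i - 1) π.length with hl | hl
  · rw [List.getD_eq_getElem?_getD, List.getD_eq_getElem?_getD, List.getElem?_drop]
    congr 2
    omega
  · rw [List.getD_eq_default _ _ (by simp; omega), List.getD_eq_default _ _ (by omega)]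

theorem ent_mem {π : List ℕ} {i : ℕ} (h1 : 1 ≤ i) (h2 : i ≤ π.length) :
    ent π i ∈ π := by
  unfold ent
  rw [if_neg (by omega), List.getD_eq_getElem _ _ (by omega)]
  exact List.getElem_mem _

theorem exists_ent_eq_of_mem {π : List ℕ} {y : ℕ} (h : y ∈ π) :
    ∃ i, 1 ≤ i ∧ i ≤ π.length ∧ ent π i = y := by
  obtain ⟨j, hj, rfl⟩ := List.mem_iff_getElem.mp h
  exact ⟨j + 1, by omega, by omega, by simp [ent, List.getElem?_eq_getElem hj]⟩

theorem forall_mem_iff_forall_ent {π : List ℕ} {P : ℕ → Prop} :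
    (∀ y ∈ π, P y) ↔ ∀ i, 1 ≤ i → i ≤ π.length → P (ent π i) := by
  refine ⟨fun h i hi1 hi => h _ (ent_mem hi1 hi), fun h y hy => ?_⟩
  obtain ⟨i, hi1, hi, rfl⟩ := exists_ent_eq_of_mem hy
  exact h i hi1 hi

theorem forall_ent_ne_iff_notMem_take {π : List ℕ} {i : ℕ} (hi : i ≤ π.length + 1)
    (y : ℕ) :
    (∀ j, 1 ≤ j → j < i → ent π j ≠ y) ↔ y ∉ π.take (i - 1) := by
  have hent : ∀ j ≤ i - 1, ent π j = ent (π.take (i - 1)) j := fun j hj => (ent_take hj).symm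
  constructor
  · intro h hy
    obtain ⟨j, hj1, hj2, rfl⟩ := exists_ent_eq_of_mem hy
    rw [List.length_take] at hj2
    exact h j hj1 (by omega) (hent j (by omega))
  · rintro h j hj1 hj2 rfl
    exact h (hent j (by omega) ▸ ent_mem hj1 (by simp; omega))

/-- Whether an index `i` counts in `mdup`, in terms of the letters `p, a, s` at positions
`i - 1, i, i + 1`, the multiplicity `k` of `a`, and whether `i` is the leftmost occurrence
of `a`. -/
def MdupLocal (p a s k : ℕ) (first : Prop) : Prop :=
  (s < a ∧ 2 ≤ k) ∨ (a = s ∧ ¬ (a < p ∧ first) ∧ ¬ p < a)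

def IsMdupIndex (π : List ℕ) (i : ℕ) : Prop :=
  MdupLocal (ent π (i - 1)) (ent π i) (ent π (i + 1)) (π.count (ent π i))
    (ent π i ∉ π.take (i - 1))

theorem mdup_eq_sum (π : List ℕ) :
    mdup π = ∑ i ∈ Finset.range π.length, if IsMdupIndex π (i + 1) then 1 else 0 := by
  have hIcc : idx1 π = (Finset.range π.length).map (addRightEmbedding 1) := by
    ext i
    simp only [idx1, Finset.mem_Icc, Finset.mem_map, Finset.mem_range, addRightEmbedding_apply]
    exact ⟨fun h => ⟨i - 1, by omega, by omega⟩, fun ⟨a, ha, hai⟩ => by omega⟩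
  rw [mdup, Finset.card_filter, hIcc, Finset.sum_map]
  refine Finset.sum_congr rfl fun i hi => if_congr ?_ rfl rfl
  rw [Finset.mem_range] at hi
  simp only [addRightEmbedding_apply, IsMdupIndex, MdupLocal, IsUnmovablePlateau,
    IsFreeDescPlateau, IsAscPlateau, IsPlateau,
    forall_ent_ne_iff_notMem_take (by omega : i + 1 ≤ π.length + 1)]
  tauto

section MdupLocal

variable {p p' a s k : ℕ} {first first' : Prop}

theorem not_mdupLocal_of_lt_next (h : a < s) : ¬ MdupLocal p a s k first := by
  unfold MdupLocal; omega

theorem mdupLocal_iff_of_next_lt (h : s < a) : MdupLocal p a s k first ↔ 2 ≤ k := by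
  unfold MdupLocal; constructor <;> intro <;> omega

theorem mdupLocal_iff_of_prev_lt (h : p < a) : MdupLocal p a s k first ↔ s < a ∧ 2 ≤ k := by
  unfold MdupLocal; constructor <;> intro <;> omega

theorem mdupLocal_congr_of_lt_prev (h : a < p) (h' : a < p') (hfirst : first ↔ first') :
    MdupLocal p a s k first ↔ MdupLocal p' a s k first' := by
  unfold MdupLocal
  simp only [hfirst, h, h', true_and, show ¬ p < a by omega, show ¬ p' < a by omega]

theorem mdupLocal_iff_of_unmovable (h : ¬ p < a) (hfirst : ¬ (a < p ∧ first)) :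
    MdupLocal p a s k first ↔ (s < a ∧ 2 ≤ k) ∨ a = s := by
  unfold MdupLocal; tauto

end MdupLocal

theorem ent_length_eq_getLastD (P : List ℕ) : ent P P.length = P.getLastD 0 := by
  rcases P.eq_nil_or_concat' with rfl | ⟨Q, b, rfl⟩
  · rfl
  · rw [List.length_append, List.length_singleton, ent_append_add Q le_rfl]
    simp [ent]

theorem ent_one_eq_headD (S : List ℕ) : ent S 1 = S.headD 0 := by
  cases S <;> rfl

theorem ent_append_cons_length (P S : List ℕ) (a : ℕ) :
    ent (P ++ a :: S) P.length = P.getLastD 0 := by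
  rw [ent_append_of_le _ le_rfl, ent_length_eq_getLastD]

theorem ent_append_cons_length_add_one (P S : List ℕ) (a : ℕ) :
    ent (P ++ a :: S) (P.length + 1) = a :=
  ent_append_add P le_rfl

theorem ent_append_cons_length_add_two (P S : List ℕ) (a : ℕ) :
    ent (P ++ a :: S) (P.length + 2) = S.headD 0 := by
  rw [ent_append_add P (by omega), ent_cons_add_one a le_rfl, ent_one_eq_headD]

theorem isMdupIndex_append_cons_iff (P S : List ℕ) (a : ℕ) :
    IsMdupIndex (P ++ a :: S) (P.length + 1) ↔
      MdupLocal (P.getLastD 0) a (S.headD 0) ((P ++ a :: S).count a) (a ∉ P) := by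
  rw [IsMdupIndex, Nat.add_sub_cancel, Nat.add_assoc, ent_append_cons_length,
    ent_append_cons_length_add_one, ent_append_cons_length_add_two, List.take_left]

theorem not_isMdupIndex_append_cons {P S : List ℕ} {x : ℕ} (hxP : x ∉ P)
    (hprev : x < P.getLastD 0) (hnext : S.headD 0 ≤ x) (hsingle : S.headD 0 < x → x ∉ S) :
    ¬ IsMdupIndex (P ++ x :: S) (P.length + 1) := by
  rw [isMdupIndex_append_cons_iff]
  rcases hnext.lt_or_eq with hlt | heq
  · rw [mdupLocal_iff_of_next_lt hlt, List.count_append, List.count_cons_self,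
      List.count_eq_zero.mpr hxP, List.count_eq_zero.mpr (hsingle hlt)]
    omega
  · rintro (⟨hdesc, -⟩ | ⟨-, hmovable, -⟩)
    · omega
    · exact hmovable ⟨hprev, hxP⟩

section Values

variable {A B : List ℕ} {x : ℕ}

theorem ent_lpos_sub_one_append_cons (hxA : x ∉ A) :
    ent (A ++ x :: B) (lpos (A ++ x :: B) x - 1) = A.getLastD 0 := by
  rw [lpos, idxOf_append_cons B hxA, Nat.add_sub_cancel, ent_append_cons_length]

theorem ent_lpos_add_one_append_cons (hxA : x ∉ A) :
    ent (A ++ x :: B) (lpos (A ++ x :: B) x + 1) = B.headD 0 := by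
  rw [lpos, idxOf_append_cons B hxA, Nat.add_assoc, ent_append_cons_length_add_two]

theorem isDAVal_append_cons_iff (hxA : x ∉ A) :
    IsDAVal (A ++ x :: B) x ↔ A.getLastD 0 < x ∧ x < B.headD 0 := by
  simp [IsDAVal, ent_lpos_sub_one_append_cons hxA, ent_lpos_add_one_append_cons hxA]

theorem neighbours_of_fdp_or_sdd (hxA : x ∉ A)
    (h : IsFDPVal (A ++ x :: B) x ∨ IsSDDVal (A ++ x :: B) x) :
    x < A.getLastD 0 ∧ B.headD 0 ≤ x ∧ (B.headD 0 < x → x ∉ B) := by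
  simp only [IsFDPVal, IsSDDVal, ent_lpos_sub_one_append_cons hxA,
    ent_lpos_add_one_append_cons hxA] at h
  rcases h with ⟨-, hprev, hnext⟩ | ⟨-, hcount, hprev, hnext⟩
  · exact ⟨hprev, hnext.le, fun h => absurd hnext h.ne⟩
  · refine ⟨hprev, hnext.le, fun _ hxB => ?_⟩
    rw [List.count_append, List.count_cons_self, List.count_eq_zero.mpr hxA] at hcount
    have := List.count_pos_iff.mpr hxB
    omega

end Values

theorem slide_perm (C D B : List ℕ) (x : ℕ) : (C ++ x :: (D ++ B)).Perm (C ++ (D ++ x :: B)) :=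
  List.perm_middle.symm.append_left C

/-- Conditions under which the letter `x` may slide from the left end of the block `D` to its
right end, between the words `C` and `B`. -/
structure CanSlideOver (C D B : List ℕ) (x : ℕ) : Prop where
  lt_of_mem_block : ∀ y ∈ D, x < y
  block_ne_nil : D ≠ []
  notMem_left : x ∉ C
  left_last_lt : C.getLastD 0 < x
  right_head_le : B.headD 0 ≤ x
  notMem_right_of_lt : B.headD 0 < x → x ∉ B

namespace CanSlideOver

variable {C D B : List ℕ} {x : ℕ}

theorem notMem_block (h : CanSlideOver C D B x) : x ∉ D :=
  fun hx => (h.lt_of_mem_block x hx).false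

theorem not_isMdupIndex_before (h : CanSlideOver C D B x) :
    ¬ IsMdupIndex (C ++ x :: (D ++ B)) (C.length + 1) := by
  obtain ⟨d, D, rfl⟩ := List.exists_cons_of_ne_nil h.block_ne_nil
  rw [isMdupIndex_append_cons_iff]
  exact not_mdupLocal_of_lt_next (by simpa using h.lt_of_mem_block d (by simp))

theorem not_isMdupIndex_after (h : CanSlideOver C D B x) :
    ¬ IsMdupIndex (C ++ (D ++ x :: B)) (C.length + D.length + 1) := by
  obtain ⟨D, d, rfl⟩ := (List.eq_nil_or_concat' D).resolve_left h.block_ne_nil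
  have hL : C ++ (D ++ [d] ++ x :: B) = (C ++ D ++ [d]) ++ x :: B := by simp
  rw [hL, show C.length + (D ++ [d]).length = (C ++ D ++ [d]).length by simp]
  refine not_isMdupIndex_append_cons ?_ ?_ h.right_head_le h.notMem_right_of_lt
  · have := h.notMem_block
    simp_all [h.notMem_left]
  · simpa using h.lt_of_mem_block d (by simp)

theorem isMdupIndex_left_iff (h : CanSlideOver C D B x) {C₁ C₂ : List ℕ} {a : ℕ}
    (hC : C = C₁ ++ a :: C₂) :
    IsMdupIndex (C ++ x :: (D ++ B)) (C₁.length + 1) ↔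
      IsMdupIndex (C ++ (D ++ x :: B)) (C₁.length + 1) := by
  have hcount := (slide_perm C D B x).count_eq a
  subst hC
  simp only [List.append_assoc, List.cons_append] at hcount ⊢
  rw [isMdupIndex_append_cons_iff, isMdupIndex_append_cons_iff, hcount]
  rcases C₂ with _ | ⟨c, C₂⟩
  · obtain ⟨d, D, rfl⟩ := List.exists_cons_of_ne_nil h.block_ne_nil
    have hax : a < x := by simpa using h.left_last_lt
    have hxd : x < d := h.lt_of_mem_block d (by simp)
    simp only [List.nil_append, List.headD_cons, List.cons_append]
    exact iff_of_false (not_mdupLocal_of_lt_next hax) (not_mdupLocal_of_lt_next (hax.trans hxd))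
  · simp

theorem isMdupIndex_block_iff (h : CanSlideOver C D B x) {D₁ D₂ : List ℕ} {a : ℕ}
    (hD : D = D₁ ++ a :: D₂) :
    IsMdupIndex (C ++ x :: (D ++ B)) (C.length + 1 + (D₁.length + 1)) ↔
      IsMdupIndex (C ++ (D ++ x :: B)) (C.length + (D₁.length + 1)) := by
  have hcount := (slide_perm C D B x).count_eq a
  have hxa : x < a := h.lt_of_mem_block a (by simp [hD])
  subst hD
  have hL : C ++ x :: (D₁ ++ a :: D₂ ++ B) = (C ++ x :: D₁) ++ a :: (D₂ ++ B) := by simp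
  have hR : C ++ (D₁ ++ a :: D₂ ++ x :: B) = (C ++ D₁) ++ a :: (D₂ ++ x :: B) := by simp
  have hfirst : a ∉ C ++ x :: D₁ ↔ a ∉ C ++ D₁ := by simp [hxa.ne']
  rw [hL, hR] at hcount
  rw [hL, hR, show C.length + 1 + (D₁.length + 1) = (C ++ x :: D₁).length + 1 by simp; omega,
    show C.length + (D₁.length + 1) = (C ++ D₁).length + 1 by simp; omega,
    isMdupIndex_append_cons_iff, isMdupIndex_append_cons_iff, hcount, hfirst]
  rcases D₂ with _ | ⟨d, D₂⟩
  · have hB : B.headD 0 < a := h.right_head_le.trans_lt hxa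
    simp only [List.nil_append, List.headD_cons]
    rw [mdupLocal_iff_of_next_lt hB, mdupLocal_iff_of_next_lt hxa]
  · simp only [List.cons_append, List.headD_cons]
    rcases D₁.eq_nil_or_concat' with rfl | ⟨D₁, e, rfl⟩
    · have hC : C.getLastD 0 < a := h.left_last_lt.trans hxa
      simp only [List.append_nil, List.getLastD_concat]
      rw [mdupLocal_iff_of_prev_lt hxa, mdupLocal_iff_of_prev_lt hC]
    · simp [List.getLast?_cons]

theorem isMdupIndex_right_iff (h : CanSlideOver C D B x) {B₁ B₂ : List ℕ} {b : ℕ}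
    (hB : B = B₁ ++ b :: B₂) :
    IsMdupIndex (C ++ x :: (D ++ B)) (C.length + 1 + D.length + (B₁.length + 1)) ↔
      IsMdupIndex (C ++ (D ++ x :: B)) (C.length + 1 + D.length + (B₁.length + 1)) := by
  have hperm : (C ++ x :: (D ++ B₁)).Perm (C ++ (D ++ x :: B₁)) := slide_perm C D B₁ x
  have hcount := (slide_perm C D B x).count_eq b
  subst hB
  have hL : C ++ x :: (D ++ (B₁ ++ b :: B₂)) = (C ++ x :: (D ++ B₁)) ++ b :: B₂ := by simp
  have hR : C ++ (D ++ x :: (B₁ ++ b :: B₂)) = (C ++ (D ++ x :: B₁)) ++ b :: B₂ := by simp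
  rw [hL, hR] at hcount
  rw [hL, hR,
    show C.length + 1 + D.length + (B₁.length + 1) = (C ++ x :: (D ++ B₁)).length + 1 by
      simp; omega,
    isMdupIndex_append_cons_iff, hperm.length_eq, isMdupIndex_append_cons_iff, hcount,
    hperm.mem_iff]
  rcases B₁.eq_nil_or_concat' with rfl | ⟨B₁, e, rfl⟩
  · obtain ⟨D, d, rfl⟩ := (List.eq_nil_or_concat' D).resolve_left h.block_ne_nil
    have hxd : x < d := h.lt_of_mem_block d (by simp)
    have hbx : b ≤ x := by simpa using h.right_head_le
    have hprev : (C ++ x :: (D ++ [d])).getLastD 0 = d := by simp [List.getLast?_cons]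
    have hprev' : (C ++ (D ++ [d] ++ [x])).getLastD 0 = x := by simp
    simp only [List.append_nil, hprev, hprev']
    rcases hbx.lt_or_eq with hlt | rfl
    · exact mdupLocal_congr_of_lt_prev (hlt.trans hxd) hlt Iff.rfl
    · have hmem : b ∈ C ++ (D ++ [d] ++ [b]) := by simp
      rw [mdupLocal_iff_of_unmovable hxd.asymm, mdupLocal_iff_of_unmovable (lt_irrefl b)]
      · exact fun hc => (lt_irrefl b) hc.1
      · exact fun hc => hc.2 hmem
  · simp [List.getLast?_cons]

theorem mdup_eq (h : CanSlideOver C D B x) :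
    mdup (C ++ x :: (D ++ B)) = mdup (C ++ (D ++ x :: B)) := by
  have hlenL : (C ++ x :: (D ++ B)).length = C.length + (1 + (D.length + B.length)) := by
    simp; omega
  have hlenR : (C ++ (D ++ x :: B)).length = C.length + (D.length + (1 + B.length)) := by
    simp; omega
  rw [mdup_eq_sum, mdup_eq_sum, hlenL, hlenR]
  simp only [Finset.sum_range_add, Finset.sum_range_one, Nat.add_zero]
  rw [if_neg h.not_isMdupIndex_before, ← Nat.add_assoc, if_neg h.not_isMdupIndex_after]
  set L := C ++ x :: (D ++ B)
  set R := C ++ (D ++ x :: B)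
  have hleft : ∀ i ∈ Finset.range C.length,
      (if IsMdupIndex L (i + 1) then 1 else 0) = if IsMdupIndex R (i + 1) then 1 else 0 :=
    fun i hi => by
      obtain ⟨C₁, a, C₂, hC, rfl⟩ := exists_eq_append_cons_of_lt (Finset.mem_range.mp hi)
      exact if_congr (h.isMdupIndex_left_iff hC) rfl rfl
  have hblock : ∀ j ∈ Finset.range D.length,
      (if IsMdupIndex L (C.length + (1 + j) + 1) then 1 else 0) =
        if IsMdupIndex R (C.length + j + 1) then 1 else 0 :=
    fun j hj => by
      obtain ⟨D₁, a, D₂, hD, rfl⟩ := exists_eq_append_cons_of_lt (Finset.mem_range.mp hj)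
      rw [show C.length + (1 + D₁.length) + 1 = C.length + 1 + (D₁.length + 1) by omega,
        show C.length + D₁.length + 1 = C.length + (D₁.length + 1) by omega]
      exact if_congr (h.isMdupIndex_block_iff hD) rfl rfl
  have hright : ∀ j ∈ Finset.range B.length,
      (if IsMdupIndex L (C.length + (1 + (D.length + j)) + 1) then 1 else 0) =
        if IsMdupIndex R (C.length + (D.length + (1 + j)) + 1) then 1 else 0 :=
    fun j hj => by
      obtain ⟨B₁, b, B₂, hB, rfl⟩ := exists_eq_append_cons_of_lt (Finset.mem_range.mp hj)
      rw [show C.length + (1 + (D.length + B₁.length)) + 1 =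
          C.length + 1 + D.length + (B₁.length + 1) by omega,
        show C.length + (D.length + (1 + B₁.length)) + 1 =
          C.length + 1 + D.length + (B₁.length + 1) by omega]
      exact if_congr (h.isMdupIndex_right_iff hB) rfl rfl
  rw [Finset.sum_congr rfl hleft, Finset.sum_congr rfl hblock, Finset.sum_congr rfl hright]
  ring

theorem isDAVal_before (h : CanSlideOver C D B x) : IsDAVal (C ++ x :: (D ++ B)) x := by
  obtain ⟨d, D, rfl⟩ := List.exists_cons_of_ne_nil h.block_ne_nil
  rw [isDAVal_append_cons_iff h.notMem_left]
  exact ⟨h.left_last_lt, h.lt_of_mem_block d (by simp)⟩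

theorem not_isDAVal_after (h : CanSlideOver C D B x) : ¬ IsDAVal (C ++ (D ++ x :: B)) x := by
  obtain ⟨D, d, rfl⟩ := (List.eq_nil_or_concat' D).resolve_left h.block_ne_nil
  have hxCD : x ∉ C ++ (D ++ [d]) := by
    have := h.notMem_block
    simp_all [h.notMem_left]
  rw [← List.append_assoc, isDAVal_append_cons_iff hxCD]
  rintro ⟨hdx, -⟩
  exact (h.lt_of_mem_block d (by simp)).asymm (by simpa using hdx)

end CanSlideOver

theorem IsGenStirling.notMem_of_lt {U V W : List ℕ} {x y : ℕ}
    (h : IsGenStirling (U ++ x :: (V ++ y :: W))) (hyx : y < x) : x ∉ W := by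
  intro hxW
  obtain ⟨i, hi, hWi⟩ := List.getElem_of_mem hxW
  have hget : ∀ (P S : List ℕ) (j : ℕ), (P ++ S).getD (P.length + j) 0 = S.getD j 0 :=
    fun P S j => by rw [List.getD_append_right _ _ _ _ (by omega), Nat.add_sub_cancel_left]
  have hsplit : U ++ x :: (V ++ y :: W) = (U ++ x :: V) ++ y :: W := by simp
  have hlen : (U ++ x :: V).length = U.length + 1 + V.length := by simp; omega
  have ha : (U ++ x :: (V ++ y :: W)).getD U.length 0 = x := by simp
  have hb : (U ++ x :: (V ++ y :: W)).getD (U.length + 1 + V.length) 0 = y := by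
    rw [hsplit, ← hlen, ← Nat.add_zero (U ++ x :: V).length, hget]
    rfl
  have hc : (U ++ x :: (V ++ y :: W)).getD (U.length + 1 + V.length + 1 + i) 0 = x := by
    rw [hsplit, ← hlen, Nat.add_assoc, hget, Nat.add_comm, List.getD_cons_succ,
      List.getD_eq_getElem _ _ hi, hWi]
  have := h (U.length + 1 + V.length + 1 + i) (by simp; omega) (U.length + 1 + V.length)
    (by omega) U.length (by omega) (by rw [ha, hc])
  rw [ha, hb] at this
  omega

theorem canSlideOver_take_drop_left {A B : List ℕ} {x k : ℕ} (hxA : x ∉ A) (hk : k < A.length)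
    (hkx : ent A k < x) (hblock : ∀ j, k < j → j ≤ A.length → x ≤ ent A j)
    (hB : B.headD 0 ≤ x) (hBx : B.headD 0 < x → x ∉ B) :
    CanSlideOver (A.take k) (A.drop k) B x := by
  refine ⟨?_, ?_, fun hxC => hxA (List.take_subset _ _ hxC), ?_, hB, hBx⟩
  · rw [forall_mem_iff_forall_ent]
    intro j hj1 hj
    rw [List.length_drop] at hj
    rw [ent_drop hj1]
    have hne : ent A (k + j) ≠ x := fun he => hxA (he ▸ ent_mem (by omega) (by omega))
    have := hblock (k + j) (by omega) (by omega)
    omega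
  · simp; omega
  · rwa [← ent_length_eq_getLastD, List.length_take, min_eq_left hk.le, ent_take le_rfl]

theorem exists_slide_of_fdp_or_sdd {π : List ℕ} {x : ℕ} (hx : 1 ≤ x)
    (h : IsFDPVal π x ∨ IsSDDVal π x) :
    ∃ C D B, CanSlideOver C D B x ∧ π = C ++ (D ++ x :: B) ∧
      gfs π x = C ++ x :: (D ++ B) := by
  obtain ⟨A, B, hxA, rfl, -⟩ :=
    List.exists_erase_eq (show x ∈ π by rcases h with h | h <;> exact h.1)
  obtain ⟨hlast, hB, hBx⟩ := neighbours_of_fdp_or_sdd hxA h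
  set k := ((Finset.range A.length).filter fun a => ent A a < x).sup id with hk
  have hgfs : gfs (A ++ x :: B) x = (A ++ B).insertIdx k x := by
    rw [gfs, if_pos h, idxOf_append_cons B hxA, eraseIdx_append_cons, hk]
    congr 2
    exact Finset.filter_congr fun a ha => by
      rw [ent_append_of_le _ (Finset.mem_range.mp ha).le]
  have hA : 0 < A.length := List.length_pos_iff.mpr (by rintro rfl; simp at hlast)
  obtain ⟨hkA, hkx, hmax⟩ := sup_filter_range_spec hA (show ent A 0 < x from hx) hk.symm
  have hblock : ∀ j, k < j → j ≤ A.length → x ≤ ent A j := fun j hkj hj => by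
    rcases hj.lt_or_eq with hlt | rfl
    · exact not_lt.mp (hmax j hkj hlt)
    · exact (ent_length_eq_getLastD A ▸ hlast).le
  refine ⟨A.take k, A.drop k, B, canSlideOver_take_drop_left hxA hkA hkx hblock hB hBx,
    by rw [← List.append_assoc, List.take_append_drop], ?_⟩
  have hsplit := insertIdx_length_append (A.take k) (A.drop k ++ B) x
  rwa [List.length_take, min_eq_left hkA.le, ← List.append_assoc, List.take_append_drop,
    ← hgfs] at hsplit

theorem canSlideOver_take_drop_right {A B : List ℕ} {x q : ℕ}
    (hst : IsGenStirling (A ++ x :: B)) (hxA : x ∉ A) (hA : A.getLastD 0 < x) (hq : 1 ≤ q)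
    (hqB : q ≤ B.length) (hblock : ∀ j, 1 ≤ j → j ≤ q → x < ent B j)
    (hnext : ent B (q + 1) ≤ x) :
    CanSlideOver A (B.take q) (B.drop q) x := by
  refine ⟨?_, List.ne_nil_of_length_pos (by simp; omega), hxA, hA, ?_, ?_⟩
  · rw [forall_mem_iff_forall_ent]
    intro j hj1 hj
    rw [List.length_take] at hj
    rw [ent_take (by omega)]
    exact hblock j hj1 (by omega)
  · rwa [← ent_one_eq_headD, ent_drop le_rfl]
  · intro hlt
    rcases hW : B.drop q with _ | ⟨y, W⟩
    · simp
    · have hyx : y < x := by simpa [hW] using hlt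
      have hst' : IsGenStirling (A ++ x :: (B.take q ++ y :: W)) := by
        rwa [← hW, List.take_append_drop]
      exact List.not_mem_cons_of_ne_of_not_mem hyx.ne' (hst'.notMem_of_lt hyx)

theorem exists_slide_of_da {π : List ℕ} {x : ℕ} (hst : IsGenStirling π)
    (hnot : ¬ (IsFDPVal π x ∨ IsSDDVal π x)) (h : IsDAVal π x) :
    ∃ C D B, CanSlideOver C D B x ∧ π = C ++ x :: (D ++ B) ∧
      gfs π x = C ++ (D ++ x :: B) := by
  obtain ⟨A, B, hxA, rfl, -⟩ := List.exists_erase_eq h.1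
  obtain ⟨hA, hB⟩ := (isDAVal_append_cons_iff hxA).mp h
  set k := (insert ((A ++ x :: B).length + 1) ((Finset.Icc ((A ++ x :: B).idxOf x + 3)
    ((A ++ x :: B).length + 1)).filter fun a => ent (A ++ x :: B) a ≤ x)).min'
    (Finset.insert_nonempty _ _) with hk
  have hgfs : gfs (A ++ x :: B) x = (A ++ B).insertIdx (k - 2) x := by
    rw [gfs, if_neg hnot, if_pos h, ← hk, idxOf_append_cons B hxA, eraseIdx_append_cons]
  obtain ⟨hkm, hkx, hmin⟩ := min'_insert_filter_Icc_spec hk.symm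
  simp only [idxOf_append_cons B hxA, List.length_append, List.length_cons] at hkm hkx hmin
  have hBpos : 0 < B.length := List.length_pos_iff.mpr (by rintro rfl; simp at hB)
  have hentB : ∀ j, 1 ≤ j → ent (A ++ x :: B) (A.length + (j + 1)) = ent B j := fun j hj => by
    rw [ent_append_add A (by omega), ent_cons_add_one x hj]
  have hk3 : A.length + 3 ≤ k := by rcases hkx with h | h <;> omega
  set q := k - A.length - 2 with hq
  have hkq : k = A.length + (q + 1 + 1) := by omega
  have hblock : ∀ j, 1 ≤ j → j ≤ q → x < ent B j := fun j hj1 hj => by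
    rcases (show j = 1 ∨ 2 ≤ j by omega) with rfl | hj2
    · rwa [ent_one_eq_headD]
    · have := hmin (A.length + (j + 1)) (by omega) (by omega)
      rw [hentB j hj1] at this
      omega
  have hnext : ent B (q + 1) ≤ x := by
    rw [← hentB _ (by omega), ← hkq]
    rcases hkx with h | h
    · rw [h, ent_of_length_lt (by simp)]
      exact Nat.zero_le x
    · exact h.2
  refine ⟨A, B.take q, B.drop q,
    canSlideOver_take_drop_right hst hxA hA (by omega) (by omega) hblock hnext,
    by rw [List.take_append_drop], ?_⟩
  have hsplit := insertIdx_length_append (A ++ B.take q) (B.drop q) x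
  rwa [show (A ++ B.take q).length = k - 2 by simp; omega, List.append_assoc,
    List.take_append_drop, ← hgfs, List.append_assoc] at hsplit

theorem gfs_preserves_mdup_general {n : ℕ} (mv : Fin n → ℕ)
    (π : List ℕ) (hπ : π ∈ QF mv) (x : ℕ) (hx : x ∈ Finset.Icc 1 n) :
    mdup (gfs π x) = mdup π ∧
      ((IsFDPVal π x ∨ IsSDDVal π x) ↔ IsDAVal (gfs π x) x) := by
  by_cases hleft : IsFDPVal π x ∨ IsSDDVal π x
  · obtain ⟨C, D, B, h, rfl, hgfs⟩ :=
      exists_slide_of_fdp_or_sdd (Finset.mem_Icc.mp hx).1 hleft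
    rw [hgfs]
    exact ⟨h.mdup_eq, iff_of_true hleft h.isDAVal_before⟩
  by_cases hright : IsDAVal π x
  · obtain ⟨C, D, B, h, rfl, hgfs⟩ :=
      exists_slide_of_da (Finset.mem_filter.mp hπ).2 hleft hright
    rw [hgfs]
    exact ⟨h.mdup_eq.symm, iff_of_false hleft h.not_isDAVal_after⟩
  rw [show gfs π x = π by rw [gfs, if_neg hleft, if_neg hright]]
  exact ⟨rfl, iff_of_false hleft hright⟩

/-- the statistic `mdup` is invariant under the generalized
Foata--Strehl action, and `x` is a free descent-plateau or single double-descent value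
of `π` iff `x` is a double-ascent value of `φ_x(π)`. -/
theorem gfs_preserves_mdup {n : ℕ} (mv : Fin n → ℕ) (hpos : ∀ i, 0 < mv i)
    (π : List ℕ) (hπ : π ∈ QF mv) (x : ℕ) (hx : x ∈ Finset.Icc 1 n) :
    mdup (gfs π x) = mdup π ∧
      ((IsFDPVal π x ∨ IsSDDVal π x) ↔ IsDAVal (gfs π x) x) :=
  gfs_preserves_mdup_general mv π hπ x hx

end
end
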